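/- arXiv:2208.13691 — 13 statements merged into one kernel-verified Lean document; each statement's English description precedes it below -/
import Mathlib

section
/- If every finitely generated subgroup of a group G has the Magnus property, then G has the Magnus property. -/
def MagnusProperty (G : Type*) [Group G] : Prop :=
  ∀ g h : G, Subgroup.normalClosure {g} = Subgroup.normalClosure {h} →
    IsConj g h ∨ IsConj g h⁻¹

/-!
Membership of `g` in the normal closure of `h` is witnessed by finitely many conjugators, since
`g` is a product of conjugates `c h^{±1} c⁻¹`. Hence two elements with the same normal closure
in `G` already have the same normal closure in the finitely generated subgroup spanned by them
and by the conjugators used in both directions, where the Magnus property applies; conjugacy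
there implies conjugacy in `G`.
-/

open Subgroup

section

variable {G : Type*} [Group G]

theorem normalClosure_singleton_eq_iff {x y : G} :
    normalClosure {x} = normalClosure {y} ↔ x ∈ normalClosure {y} ∧ y ∈ normalClosure {x} := by
  refine ⟨fun h => ⟨h ▸ subset_normalClosure rfl, h ▸ subset_normalClosure rfl⟩, fun h => ?_⟩
  exact le_antisymm (normalClosure_le_normal (Set.singleton_subset_iff.mpr h.1))
    (normalClosure_le_normal (Set.singleton_subset_iff.mpr h.2))

theorem exists_finset_forall_mem_map_normalClosure {g h : G} (hg : g ∈ normalClosure {h}) :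
    ∃ s : Finset G, ∀ H : Subgroup G, (s : Set G) ⊆ H → ∀ hh : h ∈ H,
      g ∈ (normalClosure {(⟨h, hh⟩ : H)}).map H.subtype := by
  classical
  induction hg using closure_induction with
  | mem x hx =>
    obtain ⟨_, ha, hconj⟩ := Group.mem_conjugatesOfSet_iff.mp hx
    rw [Set.mem_singleton_iff.mp ha] at hconj
    obtain ⟨c, rfl⟩ := isConj_iff.mp hconj
    refine ⟨{c}, fun H hc hh => ?_⟩
    have hcH : c ∈ H := hc (Finset.mem_singleton_self c)
    have hmem : (⟨h, hh⟩ : H) ∈ normalClosure {(⟨h, hh⟩ : H)} :=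
      subset_normalClosure (Set.mem_singleton _)
    exact ⟨⟨c, hcH⟩ * ⟨h, hh⟩ * ⟨c, hcH⟩⁻¹, normalClosure_normal.conj_mem _ hmem _, rfl⟩
  | one => exact ⟨∅, fun H _ _ => one_mem _⟩
  | mul x y _ _ hx hy =>
    obtain ⟨s, hs⟩ := hx
    obtain ⟨t, ht⟩ := hy
    refine ⟨s ∪ t, fun H hst hh => mul_mem (hs H ?_ hh) (ht H ?_ hh)⟩ <;>
      exact subset_trans (by simp) hst
  | inv x _ hx =>
    obtain ⟨s, hs⟩ := hx
    exact ⟨s, fun H hsH hh => inv_mem (hs H hsH hh)⟩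

theorem exists_fg_normalClosure_eq {g₁ g₂ : G}
    (heq : normalClosure {g₁} = normalClosure {g₂}) :
    ∃ (H : Subgroup G) (h₁ : g₁ ∈ H) (h₂ : g₂ ∈ H), H.FG ∧
      normalClosure {(⟨g₁, h₁⟩ : H)} = normalClosure {(⟨g₂, h₂⟩ : H)} := by
  classical
  obtain ⟨hg₁, hg₂⟩ := normalClosure_singleton_eq_iff.mp heq
  obtain ⟨s₁, hs₁⟩ := exists_finset_forall_mem_map_normalClosure hg₁
  obtain ⟨s₂, hs₂⟩ := exists_finset_forall_mem_map_normalClosure hg₂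
  set H := closure ((insert g₁ (insert g₂ (s₁ ∪ s₂)) : Finset G) : Set G)
  have hsub : ((insert g₁ (insert g₂ (s₁ ∪ s₂)) : Finset G) : Set G) ⊆ H := subset_closure
  have h₁ : g₁ ∈ H := hsub (by simp)
  have h₂ : g₂ ∈ H := hsub (by simp)
  refine ⟨H, h₁, h₂, ⟨_, rfl⟩, normalClosure_singleton_eq_iff.mpr ⟨?_, ?_⟩⟩
  · exact (mem_map_iff_mem H.subtype_injective).mp
      (hs₁ H (subset_trans (by intro x; simp +contextual) hsub) h₂)
  · exact (mem_map_iff_mem H.subtype_injective).mp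
      (hs₂ H (subset_trans (by intro x; simp +contextual) hsub) h₁)

end

theorem locally_magnus_imp_magnus (G : Type*) [Group G]
    (h : ∀ H : Subgroup G, H.FG → MagnusProperty H) :
    MagnusProperty G := by
  intro g₁ g₂ heq
  obtain ⟨H, h₁, h₂, hfg, hH⟩ := exists_fg_normalClosure_eq heq
  refine (h H hfg _ _ hH).imp (fun hc => ?_) (fun hc => ?_)
  · simpa using H.subtype.map_isConj hc
  · simpa using H.subtype.map_isConj hc
end

section
/- Let G be a group with the Magnus property and suppose G = H ⋉ N is a semidirect product with H ≤ G and N ⊴ G (i.e. H is a retract of G). Then H has the Magnus property. -/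
private lemma coe_mem_ncl {G : Type*} [Group G] {H : Subgroup G} {x y : H}
    (hxy : y ∈ Subgroup.normalClosure {x}) :
    (y : G) ∈ Subgroup.normalClosure {(x : G)} := by
  haveI : ((Subgroup.normalClosure {(x : G)}).comap H.subtype).Normal :=
    (Subgroup.normalClosure_normal).comap H.subtype
  have hle : Subgroup.normalClosure {x} ≤
      (Subgroup.normalClosure {(x : G)}).comap H.subtype := by
    apply Subgroup.normalClosure_le_normal
    rw [Set.singleton_subset_iff]
    exact Subgroup.subset_normalClosure rfl
  exact hle hxy

private lemma isConj_of_coe {G : Type*} [Group G] {H N : Subgroup G}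
    [N.Normal] (hcompl : N.IsComplement' H) {a b : H}
    (hc : IsConj (a : G) (b : G)) : IsConj a b := by
  obtain ⟨c, hc⟩ := hc
  obtain ⟨⟨⟨n, hn⟩, ⟨k, hk⟩⟩, hnk, -⟩ := hcompl.existsUnique c
  simp only at hnk
  have h1 : n * k * (a : G) = (b : G) * (n * k) := by rw [hnk]; exact hc
  have hy : k * (a : G) * k⁻¹ = n⁻¹ * (b : G) * n := by
    calc k * (a:G) * k⁻¹ = n⁻¹ * (n * k * (a:G)) * k⁻¹ := by group
    _ = n⁻¹ * ((b:G) * (n * k)) * k⁻¹ := by rw [h1]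
    _ = n⁻¹ * (b:G) * n := by group
  set z : G := (b : G)⁻¹ * (k * (a:G) * k⁻¹) with hz
  have hzH : z ∈ H :=
    H.mul_mem (H.inv_mem b.2) (H.mul_mem (H.mul_mem hk a.2) (H.inv_mem hk))
  have hzN : z ∈ N := by
    rw [hz, hy]
    have : (b:G)⁻¹ * (n⁻¹ * (b:G) * n) = ((b:G)⁻¹ * n⁻¹ * ((b:G)⁻¹)⁻¹) * n := by group
    rw [this]
    exact N.mul_mem (‹N.Normal›.conj_mem _ (N.inv_mem hn) _) hn
  have hz1 : z = 1 := Subgroup.disjoint_def.mp hcompl.disjoint hzN hzH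
  have key : k * (a : G) * k⁻¹ = (b : G) := by
    have := hz1
    rw [hz] at this
    calc k * (a:G) * k⁻¹ = (b:G) * ((b:G)⁻¹ * (k * (a:G) * k⁻¹)) := by group
    _ = (b:G) * 1 := by rw [this]
    _ = (b:G) := mul_one _
  rw [isConj_iff]
  refine ⟨⟨k, hk⟩, ?_⟩
  ext
  push_cast
  exact key

theorem magnus_of_retract (G : Type*) [Group G] (H N : Subgroup G)
    [N.Normal] (hcompl : N.IsComplement' H)
    (hG : MagnusProperty G) :
    MagnusProperty H := by
  intro g h hgh
  have hgG : Subgroup.normalClosure {(g : G)} = Subgroup.normalClosure {(h : G)} := by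
    apply le_antisymm <;>
    · apply Subgroup.normalClosure_le_normal
      rw [Set.singleton_subset_iff]
      exact coe_mem_ncl (hgh ▸ Subgroup.subset_normalClosure rfl)
  rcases hG g h hgG with hc | hc
  · exact Or.inl (isConj_of_coe hcompl hc)
  · right
    have : ((h : G))⁻¹ = ((h⁻¹ : H) : G) := by push_cast; ring_nf
    rw [this] at hc
    exact isConj_of_coe hcompl hc
end

section
/- Let G be a group with the Magnus property and let N ⊴ G be a normal subgroup such that for every g ∈ G \ N, the set Ω_{gN} = { ⟨gz⟩^G : z ∈ N } of normal subgroups, partially ordered by inclusion, satisfies the minimal condition (every nonempty subset has a minimal element). Then G/N has the Magnus property. -/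
section Aux

variable {G : Type*} [Group G] (N : Subgroup G) [N.Normal]

lemma normalClosure_mk_eq (x : G) :
    Subgroup.normalClosure {(QuotientGroup.mk x : G ⧸ N)} =
      (Subgroup.normalClosure {x}).map (QuotientGroup.mk' N) := by
  rw [Subgroup.map_normalClosure _ _ (QuotientGroup.mk'_surjective N)]
  simp

lemma exists_rep_mem (x y : G)
    (h : (QuotientGroup.mk y : G ⧸ N) ∈
      Subgroup.normalClosure {(QuotientGroup.mk x : G ⧸ N)}) :
    ∃ y' : G, (QuotientGroup.mk y' : G ⧸ N) = QuotientGroup.mk y ∧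
      y' ∈ Subgroup.normalClosure {x} := by
  rw [normalClosure_mk_eq] at h
  obtain ⟨y', hy', heq⟩ := h
  exact ⟨y', heq, hy'⟩

end Aux

theorem magnus_quotient_of_min_condition (G : Type*) [Group G]
    (hG : MagnusProperty G) (N : Subgroup G) [N.Normal]
    (hmin : ∀ g : G, g ∉ N →
      ∀ S : Set (Subgroup G),
        S ⊆ {K | ∃ z ∈ N, K = Subgroup.normalClosure {g * z}} → S.Nonempty →
        ∃ K ∈ S, ∀ K' ∈ S, K' ≤ K → K' = K) :
    MagnusProperty (G ⧸ N) := by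
  intro a b hab
  obtain ⟨g, rfl⟩ := QuotientGroup.mk'_surjective N a
  obtain ⟨h, rfl⟩ := QuotientGroup.mk'_surjective N b
  -- degenerate case: g ∈ N
  by_cases hgN : g ∈ N
  · have ha1 : (QuotientGroup.mk' N) g = 1 := (QuotientGroup.eq_one_iff g).2 hgN
    have hb1 : (QuotientGroup.mk' N) h = 1 := by
      have hb : (QuotientGroup.mk' N) h ∈
          Subgroup.normalClosure {(QuotientGroup.mk' N) h} :=
        Subgroup.subset_normalClosure rfl
      rw [← hab, ha1] at hb
      have : Subgroup.normalClosure ({1} : Set (G ⧸ N)) ≤ ⊥ :=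
        Subgroup.normalClosure_le_normal (by simp)
      simpa using this hb
    rw [ha1, hb1]; left; simp
  -- main case
  have key : ∀ x : G, (QuotientGroup.mk' N) x = (QuotientGroup.mk' N) g →
      ∃ h' : G, (QuotientGroup.mk' N) h' = (QuotientGroup.mk' N) h ∧
        h' ∈ Subgroup.normalClosure {x} := by
    intro x hx
    apply exists_rep_mem
    have : (QuotientGroup.mk h : G ⧸ N) ∈
        Subgroup.normalClosure {(QuotientGroup.mk' N) h} :=
      Subgroup.subset_normalClosure rfl
    rw [← hab, ← hx] at this
    exact this
  have key' : ∀ x : G, (QuotientGroup.mk' N) x = (QuotientGroup.mk' N) h →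
      ∃ g' : G, (QuotientGroup.mk' N) g' = (QuotientGroup.mk' N) g ∧
        g' ∈ Subgroup.normalClosure {x} := by
    intro x hx
    apply exists_rep_mem
    have : (QuotientGroup.mk g : G ⧸ N) ∈
        Subgroup.normalClosure {(QuotientGroup.mk' N) g} :=
      Subgroup.subset_normalClosure rfl
    rw [hab, ← hx] at this
    exact this
  -- the set S
  set S : Set (Subgroup G) :=
    {K | (∃ z ∈ N, K = Subgroup.normalClosure {g * z}) ∧
      ∃ g' h' : G, (QuotientGroup.mk' N) g' = (QuotientGroup.mk' N) g ∧
        (QuotientGroup.mk' N) h' = (QuotientGroup.mk' N) h ∧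
        K = Subgroup.normalClosure {g'} ∧
        K ≤ Subgroup.normalClosure {h'}} with hS
  have memS : ∀ g' : G, (QuotientGroup.mk' N) g' = (QuotientGroup.mk' N) g →
      (∃ h' : G, (QuotientGroup.mk' N) h' = (QuotientGroup.mk' N) h ∧
        Subgroup.normalClosure {g'} ≤ Subgroup.normalClosure {h'}) →
      Subgroup.normalClosure {g'} ∈ S := by
    intro g' hg' ⟨h', hh', hle⟩
    refine ⟨⟨g⁻¹ * g', ?_, by group⟩, g', h', hg', hh', rfl, hle⟩
    have := (QuotientGroup.eq_one_iff (g⁻¹ * g')).1 (show (QuotientGroup.mk' N) (g⁻¹ * g') = 1 by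
        rw [map_mul, map_inv, hg', inv_mul_cancel])
    exact this
  have hne : S.Nonempty := by
    obtain ⟨h₁, hh₁, hh₁mem⟩ := key g rfl
    obtain ⟨g₁, hg₁, hg₁mem⟩ := key' h₁ hh₁
    exact ⟨_, memS g₁ hg₁ ⟨h₁, hh₁,
      Subgroup.normalClosure_le_normal (Set.singleton_subset_iff.2 hg₁mem)⟩⟩
  obtain ⟨K, hKS, hKmin⟩ := hmin g hgN S (fun K hK => hK.1) hne
  obtain ⟨_, g', h', hg', hh', rfl, hle⟩ := hKS
  -- find h'' ≡ h inside normalClosure {g'}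
  obtain ⟨h'', hh'', hh''mem⟩ := key g' hg'
  obtain ⟨g'', hg'', hg''mem⟩ := key' h'' hh''
  have h1 : Subgroup.normalClosure {g''} ≤ Subgroup.normalClosure {h''} :=
    Subgroup.normalClosure_le_normal (by simpa using hg''mem)
  have h2 : Subgroup.normalClosure {h''} ≤ Subgroup.normalClosure {g'} :=
    Subgroup.normalClosure_le_normal (by simpa using hh''mem)
  have heq : Subgroup.normalClosure {g''} = Subgroup.normalClosure {g'} :=
    hKmin _ (memS g'' hg'' ⟨h'', hh'', h1⟩) (h1.trans h2)
  have hfinal : Subgroup.normalClosure {g'} = Subgroup.normalClosure {h''} :=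
    le_antisymm (heq ▸ h1) h2
  rcases hG g' h'' hfinal with hc | hc
  · left
    have := (QuotientGroup.mk' N).map_isConj hc
    rwa [hg', hh''] at this
  · right
    have := (QuotientGroup.mk' N).map_isConj hc
    rw [hg'] at this
    rw [map_inv, hh''] at this
    exact this
end

section
/- Let G be a group with the Magnus property and let N ⊴ G be a finite normal subgroup. Then G/N has the Magnus property. -/
/-! Lift the class `a` of `G/N` to an element `x` whose normal closure is minimal among all
lifts of `a`; the fibre of `a` is a coset of the finite group `N`, so such an `x` exists. Since
`b` lies in the normal closure of `a`, some lift `u` of `b` lies in the normal closure of `x`,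
and symmetrically some lift of `a` lies in the normal closure of `u`. Minimality of `x` forces
`x` and `u` to have equal normal closures, so the Magnus property of `G` makes them conjugate
up to inversion, and this descends to `a` and `b`. -/

open Subgroup

namespace MonoidHom

variable {G Q : Type*} [Group G] [Group Q]

theorem finite_preimage_singleton_of_finite_ker (f : G →* Q) [Finite f.ker] (a : Q) :
    (f ⁻¹' {a}).Finite := by
  rcases (f ⁻¹' {a}).eq_empty_or_nonempty with h | ⟨x, hx⟩
  · simp [h]
  refine ((f.ker : Set G).toFinite.image (x * ·)).subset fun y hy => ?_
  refine ⟨x⁻¹ * y, ?_, mul_inv_cancel_left x y⟩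
  simp_all [mem_ker]

theorem exists_apply_eq_normalClosure_le {f : G →* Q} (hf : Function.Surjective f) {x : G}
    {b : Q} (hb : b ∈ normalClosure {f x}) :
    ∃ u, f u = b ∧ normalClosure {u} ≤ normalClosure {x} := by
  rw [← Set.image_singleton, ← map_normalClosure _ f hf] at hb
  obtain ⟨u, hu, rfl⟩ := mem_map.mp hb
  exact ⟨u, rfl, normalClosure_le_normal (Set.singleton_subset_iff.mpr hu)⟩

end MonoidHom

theorem MagnusProperty.of_surjective {G Q : Type*} [Group G] [Group Q] (hG : MagnusProperty G)
    (f : G →* Q) (hf : Function.Surjective f) [Finite f.ker] : MagnusProperty Q := by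
  intro a b hab
  obtain ⟨x, hxa : f x = a, hxmin⟩ :=
    (f.finite_preimage_singleton_of_finite_ker a).exists_minimalFor (fun x => normalClosure {x})
      _ (hf a)
  have hb : b ∈ normalClosure {f x} := hxa ▸ hab ▸ subset_normalClosure rfl
  obtain ⟨u, hub, hux⟩ := f.exists_apply_eq_normalClosure_le hf hb
  have ha : a ∈ normalClosure {f u} := hub ▸ hab.symm ▸ subset_normalClosure rfl
  obtain ⟨v, hva, hvu⟩ := f.exists_apply_eq_normalClosure_le hf ha
  have hxu : normalClosure {x} = normalClosure {u} :=
    le_antisymm ((hxmin hva (hvu.trans hux)).trans hvu) hux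
  rcases hG x u hxu with hc | hc
  · exact .inl (hxa ▸ hub ▸ f.map_isConj hc)
  · exact .inr (hxa ▸ hub ▸ map_inv f u ▸ f.map_isConj hc)

theorem magnus_quotient_of_finite_normal (G : Type*) [Group G]
    (hG : MagnusProperty G) (N : Subgroup G) [N.Normal] (hfin : Finite N) :
    MagnusProperty (G ⧸ N) :=
  have : Finite (QuotientGroup.mk' N).ker := by rwa [QuotientGroup.ker_mk']
  hG.of_surjective _ (QuotientGroup.mk'_surjective N)
end

section
/- Let G be a group with the Magnus property such that the set Ω_G = { ⟨g⟩^G : g ∈ G } of all normal closures of single elements satisfies the minimal condition under inclusion. Then every quotient G/N of G by a normal subgroup N has the Magnus property. -/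
section Aux

variable {G : Type*} [Group G]

lemma magnus_key (N : Subgroup G) [N.Normal] (x y : G)
    (h : Subgroup.normalClosure {(x : G ⧸ N)} = Subgroup.normalClosure {(y : G ⧸ N)}) :
    ∃ c : G, (c : G ⧸ N) = (y : G ⧸ N) ∧
      Subgroup.normalClosure {c} ≤ Subgroup.normalClosure {x} := by
  have hπ : Function.Surjective (QuotientGroup.mk' N) := QuotientGroup.mk'_surjective N
  have hmapx : (Subgroup.normalClosure {x}).map (QuotientGroup.mk' N) =
      Subgroup.normalClosure {(x : G ⧸ N)} := by
    rw [Subgroup.map_normalClosure _ _ hπ, Set.image_singleton]; rfl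
  have hy : y ∈ Subgroup.normalClosure {x} ⊔ N := by
    have : y ∈ ((Subgroup.normalClosure {x}).map (QuotientGroup.mk' N)).comap
        (QuotientGroup.mk' N) := by
      rw [hmapx, h]
      exact Subgroup.subset_normalClosure rfl
    rwa [Subgroup.comap_map_eq, QuotientGroup.ker_mk'] at this
  rw [← SetLike.mem_coe, Subgroup.mul_normal] at hy
  obtain ⟨c, hc, n, hn, rfl⟩ := hy
  refine ⟨c, ?_, Subgroup.normalClosure_le_normal (by simpa using hc)⟩
  have : ((n : G) : G ⧸ N) = 1 := (QuotientGroup.eq_one_iff n).mpr hn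
  simp [this]

end Aux

theorem magnus_all_quotients_of_min_condition (G : Type*) [Group G]
    (hG : MagnusProperty G)
    (hmin : ∀ S : Set (Subgroup G),
      S ⊆ {K | ∃ g : G, K = Subgroup.normalClosure {g}} → S.Nonempty →
      ∃ K ∈ S, ∀ K' ∈ S, K' ≤ K → K' = K) :
    ∀ N : Subgroup G, ∀ _ : N.Normal, MagnusProperty (G ⧸ N) := by
  intro N hN gb hb heq
  obtain ⟨g, rfl⟩ := QuotientGroup.mk_surjective gb
  obtain ⟨h, rfl⟩ := QuotientGroup.mk_surjective hb
  set S : Set (Subgroup G) :=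
    {K | (∃ x : G, K = Subgroup.normalClosure {x} ∧ (x : G ⧸ N) = (g : G ⧸ N)) ∨
         (∃ x : G, K = Subgroup.normalClosure {x} ∧ (x : G ⧸ N) = (h : G ⧸ N))} with hS
  obtain ⟨K, hK, hKmin⟩ := hmin S
    (by rintro K (⟨x, hx, -⟩ | ⟨x, hx, -⟩) <;> exact ⟨x, hx⟩)
    ⟨Subgroup.normalClosure {g}, Or.inl ⟨g, rfl, rfl⟩⟩
  have πconj : ∀ a b : G, IsConj a b → IsConj (a : G ⧸ N) (b : G ⧸ N) := fun a b hab =>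
    (QuotientGroup.mk' N).map_isConj hab
  rcases hK with ⟨x, rfl, hx⟩ | ⟨x, rfl, hx⟩
  · obtain ⟨c, hc, hle⟩ := magnus_key N x h (by rw [hx, heq])
    have heqK := hKmin _ (Or.inr ⟨c, rfl, hc⟩) hle
    rcases hG x c heqK.symm with hconj | hconj
    · left; have := πconj _ _ hconj; rwa [hx, hc] at this
    · right; have := πconj _ _ hconj
      rw [hx] at this
      simpa [← hc] using this
  · obtain ⟨c, hc, hle⟩ := magnus_key N x g (by rw [hx, heq])
    have heqK := hKmin _ (Or.inl ⟨c, rfl, hc⟩) hle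
    rcases hG c x heqK with hconj | hconj
    · left; have := πconj _ _ hconj; rwa [hc, hx] at this
    · right; have := πconj _ _ hconj
      rw [hc] at this
      have : IsConj ((g : G ⧸ N)) ((x : G ⧸ N))⁻¹ := by simpa using this
      rw [hx] at this
      simpa using this
end

section
/- Let G be a group and suppose g ∈ G and v ∈ [G,G] are such that: (a) v is not of the form [g,w] for any w ∈ G, (b) g² ∉ [G,G], and (c) ⟨g⟩^G = ⟨gv⟩^G. Then G does not have the Magnus property. -/
theorem not_magnus_of_basic_witness_pair (G : Type*) [Group G] (g v : G)
    (hv : v ∈ commutator G)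
    (hnc : ∀ w : G, g⁻¹ * w⁻¹ * g * w ≠ v)
    (hg2 : g ^ 2 ∉ commutator G)
    (hncl : Subgroup.normalClosure {g} = Subgroup.normalClosure {g * v}) :
    ¬ MagnusProperty G := by
  intro hMP
  rcases hMP g (g * v) hncl with h | h
  · rcases h with ⟨c, hc⟩
    apply hnc (↑c⁻¹)
    have hc' : (c : G) * g = g * v * c := hc
    have : g⁻¹ * (↑c⁻¹ : G)⁻¹ * g * ↑c⁻¹ = g⁻¹ * (g * v * c) * (c : G)⁻¹ := by
      rw [← hc']; simp [mul_assoc]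
    rw [this]; group
  · rcases h with ⟨c, hc⟩
    have hc' : (c : G) * g = (g * v)⁻¹ * c := hc
    have key := congrArg Abelianization.of hc'
    have hker : Abelianization.of v = 1 := by
      have := Abelianization.commutator_subset_ker (Abelianization.of (G := G)) hv
      rwa [MonoidHom.mem_ker] at this
    simp only [map_mul, map_inv, hker, mul_one] at key
    have hg : Abelianization.of g = (Abelianization.of g)⁻¹ := by
      have h := key
      rw [mul_comm] at h
      exact mul_right_cancel h
    have h2 : Abelianization.of (g ^ 2) = 1 := by
      rw [map_pow, pow_two]; nth_rewrite 1 [hg]; simp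
    exact hg2 ((QuotientGroup.eq_one_iff _).mp h2)
end

section
/- Let G be a torsion-free nilpotent group and let g ∈ G with g ∉ Z(G). Then ⟨g⟩^G ∩ Z(G) ≤ cc_G(g), i.e. every central element of the normal closure of g lies in the co-centraliser of g. -/
/-!
Modulo `C = cc_G(g)` the element `g` is central, so `⟨g⟩^G ⊆ ⟨g⟩C` and a central element of
`⟨g⟩^G` has the form `g^k c` with `c ∈ C`. If `k ≠ 0`, the image `ḡ` of `g` in `G/Z(G)` satisfies
`ḡ^k ∈ cc(ḡ)`. In a nilpotent group this forces `ḡ` to have finite order: for `N = ⟨ḡ⟩^G` the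
quotient `N/[N,G]` has finite exponent `n`, and since `[a^n, y] ≡ [a, y]^n` modulo the next term,
the exponent `n` propagates down the series `N ≥ [N,G] ≥ [N,G,G] ≥ ⋯`, which reaches `1`.
But `G/Z(G)` is torsion-free when `G` is torsion-free nilpotent, so `ḡ = 1`, i.e. `g ∈ Z(G)`.
-/

/-- The co-centraliser of `g` in `G`: the subgroup generated by all
commutators `[g,w] = g⁻¹ * w⁻¹ * g * w`. -/
def coCentraliser {G : Type*} [Group G] (g : G) : Subgroup G :=
  Subgroup.closure {x | ∃ w : G, x = g⁻¹ * w⁻¹ * g * w}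

open Subgroup QuotientGroup
open scoped commutatorElement

section

variable {G : Type*} [Group G]

theorem commutatorElement_pow_left {x y : G} (hx : Commute x ⁅x, y⁆) (n : ℕ) :
    ⁅x ^ n, y⁆ = ⁅x, y⁆ ^ n := by
  induction n with
  | zero => simp
  | succ n ih =>
    have hconj : ⁅x ^ (n + 1), y⁆ = x * ⁅x ^ n, y⁆ * x⁻¹ * ⁅x, y⁆ := by
      simp only [commutatorElement_def, pow_succ']; group
    rw [hconj, ih, (hx.pow_right n).eq, mul_inv_cancel_right, pow_succ]

theorem QuotientGroup.mk_mem_center_iff {K : Subgroup G} [K.Normal] {x : G} :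
    (x : G ⧸ K) ∈ center (G ⧸ K) ↔ ∀ y, ⁅x, y⁆ ∈ K := by
  rw [← Subgroup.mem_upperCentralSeriesStep, Subgroup.upperCentralSeriesStep_eq_comap_center,
    mem_comap, coe_mk']

theorem Subgroup.normal_of_le_center {H : Subgroup G} (h : H ≤ center G) : H.Normal :=
  ⟨fun n hn y => by rwa [mem_center_iff.mp (h hn) y, mul_inv_cancel_right]⟩

theorem exists_zpow_mul_of_mem_normalClosure {K : Subgroup G} [K.Normal] {g x : G}
    (hg : (g : G ⧸ K) ∈ center (G ⧸ K)) (hx : x ∈ normalClosure {g}) :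
    ∃ k : ℤ, ∃ c ∈ K, g ^ k * c = x := by
  have := normal_of_le_center (zpowers_le.mpr hg)
  have hmap : (normalClosure {g}).map (mk' K) ≤ zpowers (g : G ⧸ K) := by
    rw [map_normalClosure _ _ (mk'_surjective K), Set.image_singleton]
    exact normalClosure_le_normal (Set.singleton_subset_iff.mpr (mem_zpowers _))
  obtain ⟨k, hk⟩ := mem_zpowers_iff.mp (hmap (mem_map_of_mem _ hx))
  refine ⟨k, (g ^ k)⁻¹ * x, ?_, mul_inv_cancel_left _ _⟩
  rwa [← QuotientGroup.eq, mk_zpow]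

section CoCentraliser

variable (g : G)

instance coCentraliser_normal : (coCentraliser g).Normal := by
  rw [← normalizer_eq_top_iff, eq_top_iff, coCentraliser, le_normalizer_closure_iff]
  rintro v - _ ⟨w, rfl⟩
  have hconj : v * (g⁻¹ * w⁻¹ * g * w) * v⁻¹ =
      (g⁻¹ * v⁻¹⁻¹ * g * v⁻¹)⁻¹ * (g⁻¹ * (w * v⁻¹)⁻¹ * g * (w * v⁻¹)) := by group
  rw [hconj]
  exact mul_mem (inv_mem (subset_closure ⟨_, rfl⟩)) (subset_closure ⟨_, rfl⟩)

theorem mk_mem_center_quotient_coCentraliser :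
    (g : G ⧸ coCentraliser g) ∈ center (G ⧸ coCentraliser g) := by
  refine mk_mem_center_iff.mpr fun y => ?_
  have hconj : ⁅g, y⁆ = g * (g⁻¹ * y⁻¹⁻¹ * g * y⁻¹)⁻¹ * g⁻¹ := by
    rw [commutatorElement_def]; group
  rw [hconj]
  exact (coCentraliser_normal g).conj_mem _ (inv_mem (subset_closure ⟨_, rfl⟩)) g

theorem map_coCentraliser_le {H : Type*} [Group H] (f : G →* H) :
    (coCentraliser g).map f ≤ coCentraliser (f g) := by
  rw [coCentraliser, MonoidHom.map_closure, closure_le]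
  rintro _ ⟨_, ⟨w, rfl⟩, rfl⟩
  exact subset_closure ⟨f w, by simp⟩

theorem coCentraliser_le_commutator_top {N : Subgroup G} (hg : g ∈ N) :
    coCentraliser g ≤ ⁅N, ⊤⁆ := by
  rw [coCentraliser, closure_le]
  rintro _ ⟨w, rfl⟩
  have hcomm : g⁻¹ * w⁻¹ * g * w = ⁅g⁻¹, w⁻¹⁆ := by
    rw [commutatorElement_def]; group
  rw [SetLike.mem_coe, hcomm]
  exact commutator_mem_commutator (inv_mem hg) (mem_top _)

end CoCentraliser

/-- The iterated commutator `[N, G, …, G]` with `n` copies of `G`. -/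
def Subgroup.iterCommutatorTop (N : Subgroup G) : ℕ → Subgroup G
  | 0 => N
  | n + 1 => ⁅N.iterCommutatorTop n, ⊤⁆

instance Subgroup.iterCommutatorTop_normal (N : Subgroup G) [N.Normal] :
    ∀ n, (N.iterCommutatorTop n).Normal
  | 0 => ‹_›
  | n + 1 => have := iterCommutatorTop_normal N n; commutator_normal _ _

theorem Subgroup.iterCommutatorTop_le_lowerCentralSeries (N : Subgroup G) :
    ∀ n, N.iterCommutatorTop n ≤ (⊤ : Subgroup G).lowerCentralSeries n
  | 0 => le_top
  | n + 1 => commutator_mono (iterCommutatorTop_le_lowerCentralSeries N n) le_rfl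

theorem pow_mem_commutator_top_commutator_top {A : Subgroup G} [A.Normal] {m : ℕ}
    (hA : ∀ a ∈ A, a ^ m ∈ ⁅A, (⊤ : Subgroup G)⁆) :
    ∀ b ∈ ⁅A, (⊤ : Subgroup G)⁆, b ^ m ∈ ⁅⁅A, (⊤ : Subgroup G)⁆, (⊤ : Subgroup G)⁆ := by
  set K := ⁅⁅A, (⊤ : Subgroup G)⁆, (⊤ : Subgroup G)⁆
  have hcentral : ∀ b ∈ ⁅A, (⊤ : Subgroup G)⁆, (b : G ⧸ K) ∈ center (G ⧸ K) := fun b hb =>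
    mk_mem_center_iff.mpr fun y => commutator_mem_commutator hb (mem_top y)
  intro b hb
  rw [← QuotientGroup.eq_one_iff, mk_pow]
  rw [Subgroup.commutator_def] at hb
  induction hb using closure_induction with
  | mem _ hgen =>
    obtain ⟨a, ha, y, -, rfl⟩ := hgen
    have hcomm : Commute (a : G ⧸ K) ⁅(a : G ⧸ K), (y : G ⧸ K)⁆ :=
      mem_center_iff.mp (hcentral _ (commutator_mem_commutator ha (mem_top y))) a
    have hmk (x : G) : ((⁅x, y⁆ : G) : G ⧸ K) = ⁅(x : G ⧸ K), (y : G ⧸ K)⁆ :=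
      map_commutatorElement (mk' K) x y
    rw [hmk, ← commutatorElement_pow_left hcomm, ← mk_pow, ← hmk, QuotientGroup.eq_one_iff]
    exact commutator_mem_commutator (hA a ha) (mem_top y)
  | one => simp
  | mul b c hb _ ihb ihc =>
    rw [← Subgroup.commutator_def] at hb
    have hcomm : Commute (b : G ⧸ K) (c : G ⧸ K) := (mem_center_iff.mp (hcentral b hb) _).symm
    rw [mk_mul, hcomm.mul_pow, ihb, ihc, one_mul]
  | inv b _ ih => rw [mk_inv, inv_pow, ih, inv_one]

theorem exists_pow_eq_one_of_pow_mem_commutator_top [Group.IsNilpotent G] {N : Subgroup G}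
    [N.Normal] {m : ℕ} (hN : ∀ x ∈ N, x ^ m ∈ ⁅N, (⊤ : Subgroup G)⁆) :
    ∃ j, ∀ x ∈ N, x ^ (m ^ j) = 1 := by
  have hstep : ∀ i, ∀ x ∈ N.iterCommutatorTop i, x ^ m ∈ N.iterCommutatorTop (i + 1) := by
    intro i
    induction i with
    | zero => exact hN
    | succ i ih => exact pow_mem_commutator_top_commutator_top ih
  have hpow : ∀ j, ∀ x ∈ N, x ^ (m ^ j) ∈ N.iterCommutatorTop j := by
    intro j
    induction j with
    | zero => intro x hx; rwa [pow_zero, pow_one]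
    | succ j ih => intro x hx; rw [pow_succ, pow_mul]; exact hstep j _ (ih x hx)
  obtain ⟨j, hj⟩ := Subgroup.nilpotent_iff_lowerCentralSeries.mp ‹Group.IsNilpotent G›
  refine ⟨j, fun x hx => ?_⟩
  simpa [hj] using N.iterCommutatorTop_le_lowerCentralSeries j (hpow j x hx)

theorem isOfFinOrder_of_zpow_mem_coCentraliser [Group.IsNilpotent G] {g : G} {k : ℤ}
    (hk : k ≠ 0) (hgk : g ^ k ∈ coCentraliser g) : IsOfFinOrder g := by
  have hfin : IsOfFinOrder (g : G ⧸ coCentraliser g) :=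
    isOfFinOrder_iff_zpow_eq_one.mpr ⟨k, hk, by rwa [← mk_zpow, QuotientGroup.eq_one_iff]⟩
  obtain ⟨n, hn, hgn⟩ := hfin.exists_pow_eq_one
  rw [← mk_pow, QuotientGroup.eq_one_iff] at hgn
  set N := normalClosure ({g} : Set G)
  set K := ⁅N, (⊤ : Subgroup G)⁆
  have hgN : g ∈ N := subset_normalClosure rfl
  have hgK : (g : G ⧸ K) ^ n = 1 := by
    rw [← mk_pow, QuotientGroup.eq_one_iff]
    exact coCentraliser_le_commutator_top g hgN hgn
  have hN : ∀ x ∈ N, x ^ n ∈ K := by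
    intro x hx
    obtain ⟨j, c, hc, rfl⟩ := exists_zpow_mul_of_mem_normalClosure
      (mk_mem_center_iff.mpr fun y => commutator_mem_commutator hgN (mem_top y)) hx
    rw [← QuotientGroup.eq_one_iff, mk_pow, mk_mul, (QuotientGroup.eq_one_iff c).mpr hc, mul_one,
      mk_zpow, ← zpow_natCast, ← zpow_mul, mul_comm, zpow_mul, zpow_natCast, hgK, one_zpow]
  obtain ⟨j, hj⟩ := exists_pow_eq_one_of_pow_mem_commutator_top hN
  exact isOfFinOrder_iff_pow_eq_one.mpr ⟨n ^ j, pow_pos hn j, hj g hgN⟩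

theorem eq_one_of_isOfFinOrder_of_mem_center_quotient_center
    (hZ : ∀ z ∈ center G, IsOfFinOrder z → z = 1) {q : G ⧸ center G}
    (hq : q ∈ center (G ⧸ center G)) (hfin : IsOfFinOrder q) : q = 1 := by
  obtain ⟨x, rfl⟩ := mk_surjective q
  obtain ⟨n, hn, hxn⟩ := hfin.exists_pow_eq_one
  rw [← mk_pow, QuotientGroup.eq_one_iff] at hxn
  rw [QuotientGroup.eq_one_iff, mem_center_iff]
  intro y
  have hxy : ⁅x, y⁆ ∈ center G := mk_mem_center_iff.mp hq y
  have hxyn : ⁅x, y⁆ ^ n = 1 := by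
    rw [← commutatorElement_pow_left (mem_center_iff.mp hxy x) n,
      commutatorElement_eq_one_iff_commute]
    exact (mem_center_iff.mp hxn y).symm
  have hxy1 := hZ _ hxy (isOfFinOrder_iff_pow_eq_one.mpr ⟨n, hn, hxyn⟩)
  exact (commutatorElement_eq_one_iff_mul_comm.mp hxy1).symm

theorem eq_one_of_isOfFinOrder_of_torsionFree_center [Group.IsNilpotent G]
    (hZ : ∀ z ∈ center G, IsOfFinOrder z → z = 1) {x : G} (hx : IsOfFinOrder x) : x = 1 := by
  refine Group.nilpotent_center_quotient_ind
    (P := fun G _ _ => (∀ z ∈ center G, IsOfFinOrder z → z = 1) → ∀ x : G, IsOfFinOrder x → x = 1)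
    G (fun _ _ _ _ x _ => Subsingleton.elim x 1) (fun G _ _ ih hZ x hx => ?_) hZ x hx
  have hmk : (x : G ⧸ center G) = 1 :=
    ih (fun _ => eq_one_of_isOfFinOrder_of_mem_center_quotient_center hZ) _
      ((mk' _).isOfFinOrder hx)
  exact hZ x ((QuotientGroup.eq_one_iff x).mp hmk) hx

end

theorem centre_inter_normalClosure_le_coCentraliser (G : Type*) [Group G]
    (htf : ∀ g : G, g ≠ 1 → ¬IsOfFinOrder g) [Group.IsNilpotent G]
    (g : G) (hg : g ∉ Subgroup.center G) :
    Subgroup.normalClosure {g} ⊓ Subgroup.center G ≤ coCentraliser g := by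
  rintro z ⟨hz, hzZ⟩
  obtain ⟨k, c, hc, rfl⟩ :=
    exists_zpow_mul_of_mem_normalClosure (mk_mem_center_quotient_coCentraliser g) hz
  obtain rfl | hk := eq_or_ne k 0
  · simpa using hc
  refine absurd ?_ hg
  set π := mk' (center G)
  have hgk : π g ^ k ∈ coCentraliser (π g) := by
    have hπ : π (g ^ k) * π c = 1 := by
      rw [← map_mul]
      exact (QuotientGroup.eq_one_iff _).mpr hzZ
    rw [← map_zpow, eq_inv_of_mul_eq_one_left hπ]
    exact inv_mem (map_coCentraliser_le g π (mem_map_of_mem π hc))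
  have hG : ∀ x : G, IsOfFinOrder x → x = 1 := fun x hx => by_contra fun h => htf x h hx
  rw [← QuotientGroup.eq_one_iff]
  exact eq_one_of_isOfFinOrder_of_torsionFree_center
    (fun q hq => eq_one_of_isOfFinOrder_of_mem_center_quotient_center (fun z _ => hG z) hq)
    (isOfFinOrder_of_zpow_mem_coCentraliser hk hgk)
end

section
/- Every torsion-free nilpotent group of nilpotency class at most 2 has the Magnus property. -/
/-- The December 2024 Mathlib definition, removed since. -/
def Monoid.IsTorsionFree (G : Type*) [Monoid G] : Prop :=
  ∀ g : G, g ≠ 1 → ¬IsOfFinOrder g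

/-!
In a group of class two every commutator is central, so `x ↦ ⁅g, x⁆` is a homomorphism and the
normal closure of `g` is `{g ^ n * ⁅g, x⁆}`. If `g` and `h` have the same normal closure, write
`h = g ^ n * ⁅g, x⁆` and `g = h ^ m * ⁅h, y⁆`; substituting the first into the second gives
`g = g ^ (n * m) * ⁅g, t⁆`. If `n * m = 1`, then `n = ±1` and `h` or `h⁻¹` is `g * ⁅g, x'⁆`, a
conjugate of `g`. Otherwise `g ^ (1 - n * m) = ⁅g, t⁆` is central, so every `⁅g, w⁆` has finite
order (as `⁅g, w⁆ ^ k = ⁅g ^ k, w⁆`); torsion-freeness makes `g` central, hence `g = 1 = h`.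
-/

open Subgroup
open scoped commutatorElement

section

variable {G : Type*} [Group G]

lemma Monoid.IsTorsionFree.eq_one_of_zpow_eq_one (htf : Monoid.IsTorsionFree G) {a : G} {k : ℤ}
    (hk : k ≠ 0) (ha : a ^ k = 1) : a = 1 := by
  by_contra ha1
  exact htf a ha1 (isOfFinOrder_iff_zpow_eq_one.mpr ⟨k, hk, ha⟩)

lemma commutatorElement_mul_of_mem_center_left {a c : G} (hc : c ∈ center G) (b : G) :
    ⁅a * c, b⁆ = ⁅a, b⁆ := by
  rw [commutatorElement_def, commutatorElement_def, mul_assoc a c b, ← mem_center_iff.mp hc b]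
  group

namespace ClassTwo

lemma commutatorElement_mem_center (hG : commutator G ≤ center G) (a b : G) :
    ⁅a, b⁆ ∈ center G :=
  hG (commutator_mem_commutator (mem_top a) (mem_top b))

lemma commute_commutatorElement (hG : commutator G ≤ center G) (a b c : G) :
    Commute ⁅a, b⁆ c :=
  (mem_center_iff.mp (commutatorElement_mem_center hG a b) c).symm

lemma commutatorElement_mul_right (hG : commutator G ≤ center G) (a b c : G) :
    ⁅a, b * c⁆ = ⁅a, b⁆ * ⁅a, c⁆ := by
  rw [commutatorElement_mul_right_eq_mul_conj, mul_assoc _ b,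
    (commute_commutatorElement hG a c b).symm.eq, ← mul_assoc, mul_inv_cancel_right]

def commutatorElementHom (hG : commutator G ≤ center G) (a : G) : G →* G :=
  MonoidHom.mk' (⁅a, ·⁆) (commutatorElement_mul_right hG a)

lemma commutatorElement_inv_right (hG : commutator G ≤ center G) (a b : G) :
    ⁅a, b⁻¹⁆ = ⁅a, b⁆⁻¹ :=
  map_inv (commutatorElementHom hG a) b

lemma commutatorElement_zpow_right (hG : commutator G ≤ center G) (a b : G) (n : ℤ) :
    ⁅a, b ^ n⁆ = ⁅a, b⁆ ^ n :=
  map_zpow (commutatorElementHom hG a) b n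

lemma commutatorElement_zpow_left (hG : commutator G ≤ center G) (a b : G) (n : ℤ) :
    ⁅a ^ n, b⁆ = ⁅a, b⁆ ^ n := by
  rw [← commutatorElement_inv b, commutatorElement_zpow_right hG, ← inv_zpow,
    commutatorElement_inv]

lemma conj_eq_mul_commutatorElement (hG : commutator G ≤ center G) (c g : G) :
    c * g * c⁻¹ = g * ⁅g, c⁻¹⁆ := by
  rw [commutatorElement_inv_right hG, commutatorElement_inv,
    ← (commute_commutatorElement hG c g g).eq, commutatorElement_def, inv_mul_cancel_right]

lemma isConj_mul_commutatorElement (hG : commutator G ≤ center G) (g x : G) :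
    IsConj g (g * ⁅g, x⁆) :=
  isConj_iff.mpr ⟨x⁻¹, by rw [conj_eq_mul_commutatorElement hG, inv_inv]⟩

lemma exists_eq_zpow_mul_commutatorElement_of_mem_normalClosure (hG : commutator G ≤ center G)
    {g z : G} (hz : z ∈ normalClosure {g}) : ∃ (n : ℤ) (x : G), z = g ^ n * ⁅g, x⁆ := by
  induction hz using closure_induction with
  | mem z hz =>
    obtain ⟨_, rfl, hconj⟩ := Group.mem_conjugatesOfSet_iff.mp hz
    obtain ⟨c, rfl⟩ := isConj_iff.mp hconj
    exact ⟨1, c⁻¹, by rw [zpow_one, conj_eq_mul_commutatorElement hG]⟩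
  | one => exact ⟨0, 1, by simp⟩
  | mul y z _ _ hy hz =>
    obtain ⟨n, x, rfl⟩ := hy
    obtain ⟨m, y, rfl⟩ := hz
    refine ⟨n + m, x * y, ?_⟩
    rw [zpow_add, commutatorElement_mul_right hG, mul_assoc, ← mul_assoc ⁅g, x⁆,
      (commute_commutatorElement hG g x _).eq]
    group
  | inv z _ hz =>
    obtain ⟨n, x, rfl⟩ := hz
    refine ⟨-n, x⁻¹, ?_⟩
    rw [mul_inv_rev, commutatorElement_inv_right hG, zpow_neg,
      (commute_commutatorElement hG g x _).inv_inv.eq]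

lemma zpow_mul_commutatorElement_zpow (hG : commutator G ≤ center G) (g x : G) (n m : ℤ) :
    (g ^ n * ⁅g, x⁆) ^ m = g ^ (n * m) * ⁅g, x ^ m⁆ := by
  rw [(commute_commutatorElement hG g x _).symm.mul_zpow, ← zpow_mul,
    commutatorElement_zpow_right hG]

lemma commutatorElement_zpow_mul_commutatorElement (hG : commutator G ≤ center G)
    (g x y : G) (n : ℤ) : ⁅g ^ n * ⁅g, x⁆, y⁆ = ⁅g, y ^ n⁆ := by
  rw [commutatorElement_mul_of_mem_center_left (commutatorElement_mem_center hG g x),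
    commutatorElement_zpow_left hG, commutatorElement_zpow_right hG]

lemma mem_center_of_zpow_mem_center (hG : commutator G ≤ center G)
    (htf : Monoid.IsTorsionFree G) {g : G} {k : ℤ} (hk : k ≠ 0) (hgk : g ^ k ∈ center G) :
    g ∈ center G := by
  refine mem_center_iff.mpr fun w ↦ ?_
  have hpow : ⁅g, w⁆ ^ k = 1 := by
    rw [← commutatorElement_zpow_left hG, commutatorElement_eq_one_iff_commute]
    exact (mem_center_iff.mp hgk w).symm
  exact (commutatorElement_eq_one_iff_commute.mp (htf.eq_one_of_zpow_eq_one hk hpow)).symm.eq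

lemma eq_one_of_eq_zpow_mul_commutatorElement (hG : commutator G ≤ center G)
    (htf : Monoid.IsTorsionFree G) {g t : G} {k : ℤ} (hk : k ≠ 1) (hg : g = g ^ k * ⁅g, t⁆) :
    g = 1 := by
  have hk' : 1 - k ≠ 0 := sub_ne_zero.mpr hk.symm
  have hpow : g ^ (1 - k) = ⁅g, t⁆ :=
    calc g ^ (1 - k) = (g ^ k)⁻¹ * g := by group
      _ = ⁅g, t⁆ := inv_mul_eq_iff_eq_mul.mpr hg
  have hcentral : g ∈ center G :=
    mem_center_of_zpow_mem_center hG htf hk' (hpow ▸ commutatorElement_mem_center hG g t)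
  rw [commutatorElement_eq_one_iff_commute.mpr (mem_center_iff.mp hcentral t).symm] at hpow
  exact htf.eq_one_of_zpow_eq_one hk' hpow

end ClassTwo

end

open ClassTwo in
theorem magnus_of_torsionFree_class_two (G : Type*) [Group G]
    (htf : Monoid.IsTorsionFree G)
    (hclass2 : commutator G ≤ Subgroup.center G) :
    MagnusProperty G := by
  intro g h hgh
  obtain ⟨n, x, rfl⟩ := exists_eq_zpow_mul_commutatorElement_of_mem_normalClosure hclass2
    (hgh ▸ subset_normalClosure (Set.mem_singleton h))
  obtain ⟨m, y, hg⟩ := exists_eq_zpow_mul_commutatorElement_of_mem_normalClosure hclass2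
    (hgh.symm ▸ subset_normalClosure (Set.mem_singleton g))
  rw [zpow_mul_commutatorElement_zpow hclass2, commutatorElement_zpow_mul_commutatorElement hclass2,
    mul_assoc, ← commutatorElement_mul_right hclass2] at hg
  obtain hnm | hnm := eq_or_ne (n * m) 1
  · obtain rfl | rfl := Int.eq_one_or_neg_one_of_mul_eq_one hnm
    · exact .inl (by simpa using isConj_mul_commutatorElement hclass2 g x)
    · refine .inr ?_
      rw [zpow_neg_one, mul_inv_rev, inv_inv, ← commutatorElement_inv_right hclass2,
        (commute_commutatorElement hclass2 g x⁻¹ g).eq]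
      exact isConj_mul_commutatorElement hclass2 g x⁻¹
  · obtain rfl := eq_one_of_eq_zpow_mul_commutatorElement hclass2 htf hnm hg
    simp
end

section
/- Let G be a group and g ∈ G \ Z(G) such that ⟨g⟩^G ∩ Z(G) ≤ cc_G(g). Then for every z ∈ ⟨g⟩^G ∩ Z(G) we have ⟨gz⟩^G = ⟨g⟩^G. -/
theorem normalClosure_mul_central (G : Type*) [Group G] (g : G)
    (hg : g ∉ Subgroup.center G)
    (hsub : Subgroup.normalClosure {g} ⊓ Subgroup.center G ≤ coCentraliser g) :
    ∀ z ∈ Subgroup.normalClosure ({g} : Set G) ⊓ Subgroup.center G,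
      Subgroup.normalClosure {g * z} = Subgroup.normalClosure {g} := by
  intro z hz
  obtain ⟨hzN, hzC⟩ := hz
  have h : ∀ w : G, w * z = z * w := Subgroup.mem_center_iff.mp hzC
  have hgz : g * z ∈ Subgroup.normalClosure ({g} : Set G) := by
    exact mul_mem (Subgroup.subset_normalClosure (Set.mem_singleton g)) hzN
  -- coCentraliser g ≤ normalClosure {g*z}
  have hcc : coCentraliser g ≤ Subgroup.normalClosure ({g * z} : Set G) := by
    rw [coCentraliser, Subgroup.closure_le]
    rintro x ⟨w, rfl⟩
    have key : g⁻¹ * w⁻¹ * g * w = (g * z)⁻¹ * (w⁻¹ * (g * z) * w) := by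
      have h1 := h g
      have h2 := h (w⁻¹)
      have h3 := h (g⁻¹)
      calc g⁻¹ * w⁻¹ * g * w
          = z⁻¹ * (z * g⁻¹) * w⁻¹ * g * w := by group
        _ = z⁻¹ * (g⁻¹ * z) * w⁻¹ * g * w := by rw [← h3]
        _ = z⁻¹ * g⁻¹ * (z * w⁻¹) * g * w := by group
        _ = z⁻¹ * g⁻¹ * (w⁻¹ * z) * g * w := by rw [← h2]
        _ = z⁻¹ * g⁻¹ * w⁻¹ * (z * g) * w := by group
        _ = z⁻¹ * g⁻¹ * w⁻¹ * (g * z) * w := by rw [← h1]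
        _ = (g * z)⁻¹ * (w⁻¹ * (g * z) * w) := by group
    rw [key]
    have hN : (Subgroup.normalClosure ({g * z} : Set G)).Normal :=
      Subgroup.normalClosure_normal
    have hmem : g * z ∈ Subgroup.normalClosure ({g * z} : Set G) :=
      Subgroup.subset_normalClosure (Set.mem_singleton _)
    have hconj : w⁻¹ * (g * z) * w ∈ Subgroup.normalClosure ({g * z} : Set G) := by
      simpa using hN.conj_mem _ hmem w⁻¹
    exact mul_mem (inv_mem hmem) hconj
  have hzmem : z ∈ Subgroup.normalClosure ({g * z} : Set G) :=
    hcc (hsub ⟨hzN, hzC⟩)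
  have hgmem : g ∈ Subgroup.normalClosure ({g * z} : Set G) := by
    have := mul_mem (Subgroup.subset_normalClosure (Set.mem_singleton (g * z))) (inv_mem hzmem)
    simpa using this
  apply le_antisymm
  · exact Subgroup.normalClosure_le_normal (by simpa using hgz)
  · exact Subgroup.normalClosure_le_normal (by simpa using hgmem)
end

section
/- Let G be a torsion-free, locally nilpotent group with the Magnus property. Then G/Z(G) has the Magnus property. -/
/-!
Modulo `⁅normalClosure {x}, ⊤⁆` the element `x` is central, so every element of
`normalClosure {x}` is congruent to a power of `x`. If `ḡ, h̄ ∈ G ⧸ center G` have the same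
normal closure `N`, then `h̄ ≡ ḡ ^ k` and `ḡ ≡ h̄ ^ l` modulo `⁅N, ⊤⁆`.

If `k = ±1`, lift `h̄` to `h' = g ^ k * c` with `c ∈ ⁅normalClosure {g}, ⊤⁆`. Commutators do
not see central factors, so `c ∈ normalClosure {h'}`; hence `g` and `h'` have the same normal
closure in `G`, and the Magnus property of `G` applies.

Otherwise `g ^ (k * l - 1) ∈ ⁅zpowers g, ⊤⁆ ⊔ center G` with `k * l ≠ 1`. In a torsion-free
nilpotent group this forces `g` to be central: the upper central series has torsion-free
factors, so `g` can be pushed down it one term at a time. Only finitely many elements are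
involved, so local nilpotency is enough. Then `ḡ = 1`, hence `h̄ = 1`.
-/

open Subgroup
open scoped commutatorElement

namespace Monoid.IsTorsionFree

variable {G : Type*} [Group G]

theorem eq_one_of_zpow_eq_one_s12 (hG : Monoid.IsTorsionFree G) {x : G} {n : ℤ} (hn : n ≠ 0)
    (hx : x ^ n = 1) : x = 1 :=
  of_not_not fun hx1 => hG x hx1 (isOfFinOrder_iff_zpow_eq_one.mpr ⟨n, hn, hx⟩)

theorem subgroup (hG : Monoid.IsTorsionFree G) (H : Subgroup G) : Monoid.IsTorsionFree H :=
  fun x hx hfin => hG x (by simpa using hx) (H.subtype.isOfFinOrder hfin)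

end Monoid.IsTorsionFree

def Group.IsLocallyNilpotent (G : Type*) [Group G] : Prop :=
  ∀ H : Subgroup G, H.FG → Group.IsNilpotent H

theorem commutatorElement_zpow_left_of_mem_center {G : Type*} [Group G] {a b : G}
    (h : ⁅a, b⁆ ∈ center G) (n : ℤ) : ⁅a ^ n, b⁆ = ⁅a, b⁆ ^ n := by
  have step (m : ℤ) : ⁅a ^ (m + 1), b⁆ = ⁅a, b⁆ * ⁅a ^ m, b⁆ := by
    rw [zpow_add_one, commutatorElement_mul_left_eq_conj_mul, mem_center_iff.mp h (a ^ m),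
      mul_inv_cancel_right]
  induction n using Int.induction_on with
  | zero => simp
  | succ m ih => rw [step, ih, ← zpow_one_add, add_comm]
  | pred m ih => rw [← mul_right_inj ⁅a, b⁆, ← step, sub_add_cancel, ih, ← zpow_one_add,
      add_sub_cancel]

namespace Subgroup

variable {G G' : Type*} [Group G] [Group G']

instance commutator_top_normal (H : Subgroup G) : (⁅H, ⊤⁆ : Subgroup G).Normal :=
  normalizer_eq_top_iff.mp (top_le_iff.mp (normalizer_commutator_ge_right H ⊤))

theorem normal_zpowers_of_mem_center {x : G} (hx : x ∈ center G) : (zpowers x).Normal :=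
  ⟨fun _ hn g => by
    obtain ⟨k, rfl⟩ := mem_zpowers_iff.mp hn
    rw [mem_center_iff.mp (zpow_mem hx k) g, mul_inv_cancel_right]
    exact zpow_mem_zpowers x k⟩

theorem commutator_sup_center_le (H K : Subgroup G) : ⁅H ⊔ center G, K⁆ ≤ ⁅H, K⁆ := by
  rw [commutator_le]
  rintro _ hx k hk
  obtain ⟨h, hh, z, hz, rfl⟩ := mem_sup_of_normal_right.mp hx
  have hzk : ⁅z, k⁆ = 1 := Commute.commutator_eq (mem_center_iff.mp hz k).symm
  rw [commutatorElement_mul_left_eq_conj_mul, hzk, mul_one, mul_inv_cancel, one_mul]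
  exact commutator_mem_commutator hh hk

section CentralModulo

variable {C : Subgroup G} [C.Normal] {a : G}

theorem normalClosure_singleton_le_upperCentralSeriesStep (ha : ∀ y, ⁅a, y⁆ ∈ C) :
    normalClosure {a} ≤ C.upperCentralSeriesStep :=
  have : C.upperCentralSeriesStep.Normal :=
    upperCentralSeriesStep_eq_comap_center C ▸ inferInstance
  normalClosure_le_normal (Set.singleton_subset_iff.mpr ha)

theorem commutator_normalClosure_singleton_le (ha : ∀ y, ⁅a, y⁆ ∈ C) :
    ⁅normalClosure {a}, ⊤⁆ ≤ C :=
  commutator_le.mpr fun _ hn y _ => normalClosure_singleton_le_upperCentralSeriesStep ha hn y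

theorem exists_mk_eq_zpow_of_mem_normalClosure (ha : ∀ y, ⁅a, y⁆ ∈ C) {u : G}
    (hu : u ∈ normalClosure {a}) : ∃ k : ℤ, (u : G ⧸ C) = (a : G ⧸ C) ^ k := by
  have hcen : a ∈ comap (QuotientGroup.mk' C) (center (G ⧸ C)) :=
    upperCentralSeriesStep_eq_comap_center C ▸ ha
  have : (zpowers (a : G ⧸ C)).Normal := normal_zpowers_of_mem_center (mem_comap.mp hcen)
  have hle : normalClosure {a} ≤ comap (QuotientGroup.mk' C) (zpowers (a : G ⧸ C)) :=
    normalClosure_le_normal (Set.singleton_subset_iff.mpr (mem_zpowers _))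
  obtain ⟨k, hk⟩ := mem_zpowers_iff.mp (hle hu)
  exact ⟨k, hk.symm⟩

end CentralModulo

theorem map_commutator_normalClosure_singleton {f : G →* G'} (hf : Function.Surjective f)
    (a : G) : map f ⁅normalClosure {a}, ⊤⁆ = ⁅normalClosure {f a}, ⊤⁆ := by
  rw [map_commutator, map_normalClosure _ _ hf, Set.image_singleton, ← MonoidHom.range_eq_map,
    MonoidHom.range_eq_top_of_surjective _ hf]

theorem comap_commutator_normalClosure_singleton {f : G →* G'} (hf : Function.Surjective f)
    (a : G) : comap f ⁅normalClosure {f a}, ⊤⁆ = ⁅normalClosure {a}, ⊤⁆ ⊔ f.ker := by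
  rw [← map_commutator_normalClosure_singleton hf, comap_map_eq]

theorem normalClosure_le_sup_ker_of_normalClosure_map_eq {f : G →* G'}
    (hf : Function.Surjective f) {a b : G} (h : normalClosure {f a} = normalClosure {f b}) :
    normalClosure {a} ≤ normalClosure {b} ⊔ f.ker := by
  rw [← comap_map_eq, map_normalClosure _ _ hf, Set.image_singleton, ← h,
    ← Set.image_singleton, ← map_normalClosure _ _ hf]
  exact le_comap_map _ _

theorem normalClosure_eq_normalClosure_zpow_mul {g c : G} {k : ℤ} (hk : k * k = 1)
    (hc : c ∈ ⁅normalClosure {g}, (⊤ : Subgroup G)⁆)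
    (hle : normalClosure {g} ≤ normalClosure {g ^ k * c} ⊔ center G) :
    normalClosure {g} = normalClosure {g ^ k * c} := by
  apply le_antisymm
  · have hc' : c ∈ normalClosure {g ^ k * c} :=
      commutator_le_left _ _ (commutator_sup_center_le _ _ (commutator_mono hle (le_refl ⊤) hc))
    have hg : (g ^ k * c * c⁻¹) ^ k ∈ normalClosure {g ^ k * c} :=
      zpow_mem (mul_mem (subset_normalClosure (Set.mem_singleton _)) (inv_mem hc')) k
    rw [mul_inv_cancel_right, ← zpow_mul, hk, zpow_one] at hg
    exact normalClosure_le_normal (Set.singleton_subset_iff.mpr hg)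
  · refine normalClosure_le_normal (Set.singleton_subset_iff.mpr (mul_mem ?_ ?_))
    · exact zpow_mem (subset_normalClosure (Set.mem_singleton _)) k
    · exact commutator_le_left _ _ hc

theorem mem_upperCentralSeries_of_zpow_mem (hG : Monoid.IsTorsionFree G) {n : ℤ} (hn : n ≠ 0) :
    ∀ {i : ℕ} {u : G}, u ∈ upperCentralSeries G (i + 1) →
      u ^ n ∈ upperCentralSeries G i → u ∈ upperCentralSeries G i
  | 0, _, _, hun => mem_bot.mpr (hG.eq_one_of_zpow_eq_one_s12 hn (mem_bot.mp hun))
  | i + 1, u, hu, hun => mem_upperCentralSeries_succ_iff.mpr fun y => by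
    have hd : ⁅u, y⁆ ∈ upperCentralSeries G (i + 1) := mem_upperCentralSeries_succ_iff.mp hu y
    refine mem_upperCentralSeries_of_zpow_mem hG hn hd ?_
    -- `⁅u, y⁆` is central modulo `upperCentralSeries G i`, so there `⁅u ^ n, y⁆ = ⁅u, y⁆ ^ n`.
    let π := QuotientGroup.mk' (upperCentralSeries G i)
    have hcen : ⁅π u, π y⁆ ∈ center (G ⧸ upperCentralSeries G i) := by
      rw [← map_commutatorElement]
      exact (upperCentralSeriesStep_eq_comap_center (upperCentralSeries G i) ▸ hd :
        ⁅u, y⁆ ∈ comap π (center _))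
    refine (QuotientGroup.eq_one_iff _).mp ?_
    change π (⁅u, y⁆ ^ n) = 1
    rw [map_zpow, map_commutatorElement, ← commutatorElement_zpow_left_of_mem_center hcen,
      ← map_zpow, ← map_commutatorElement]
    exact (QuotientGroup.eq_one_iff _).mpr (mem_upperCentralSeries_succ_iff.mp hun y)

theorem mem_center_of_zpow_mem_commutator_sup_center [Group.IsNilpotent G]
    (hG : Monoid.IsTorsionFree G) {a : G} {n : ℤ} (hn : n ≠ 0)
    (ha : a ^ n ∈ ⁅zpowers a, ⊤⁆ ⊔ center G) : a ∈ center G := by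
  suffices ∀ j, a ∈ upperCentralSeries G (j + 1) → a ∈ upperCentralSeries G 1 by
    rw [← upperCentralSeries_one]
    refine this (Group.nilpotencyClass G) (upperCentralSeries_mono G (Nat.le_succ _) ?_)
    rw [upperCentralSeries_nilpotencyClass]
    exact mem_top a
  intro j
  induction j with
  | zero => exact id
  | succ j ih =>
    intro hj
    have hle : ⁅zpowers a, ⊤⁆ ⊔ center G ≤ upperCentralSeries G (j + 1) := by
      refine sup_le ?_ ?_
      · exact (commutator_mono (zpowers_le.mpr hj) le_rfl).trans
          (commutator_upperCentralSeries_top_le G _)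
      · exact upperCentralSeries_one G ▸ upperCentralSeries_mono G (by omega)
    exact ih (mem_upperCentralSeries_of_zpow_mem hG hn hj (hle ha))

theorem exists_fg_mem_commutator_of_mem_commutator_top {K : Subgroup G} {c : G}
    (hc : c ∈ ⁅K, (⊤ : Subgroup G)⁆) : ∃ H : Subgroup G, H.FG ∧ c ∈ ⁅K, H⁆ := by
  rw [commutator_def] at hc
  induction hc using closure_induction with
  | mem _ hx =>
    obtain ⟨k, hk, x, -, rfl⟩ := hx
    exact ⟨closure {x}, ⟨{x}, by simp⟩,
      commutator_mem_commutator hk (subset_closure (Set.mem_singleton x))⟩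
  | one => exact ⟨⊥, .bot, one_mem _⟩
  | mul _ _ _ _ h₁ h₂ =>
    obtain ⟨H₁, hH₁, hc₁⟩ := h₁
    obtain ⟨H₂, hH₂, hc₂⟩ := h₂
    exact ⟨H₁ ⊔ H₂, hH₁.sup hH₂, mul_mem (commutator_mono le_rfl le_sup_left hc₁)
      (commutator_mono le_rfl le_sup_right hc₂)⟩
  | inv _ _ h =>
    obtain ⟨H, hH, hc⟩ := h
    exact ⟨H, hH, inv_mem hc⟩

end Subgroup

namespace Group.IsLocallyNilpotent

variable {G : Type*} [Group G]

theorem mem_center_of_zpow_mem_commutator_sup_center (hln : Group.IsLocallyNilpotent G)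
    (hG : Monoid.IsTorsionFree G) {a : G} {n : ℤ} (hn : n ≠ 0)
    (ha : a ^ n ∈ ⁅zpowers a, ⊤⁆ ⊔ center G) : a ∈ center G := by
  refine mem_center_iff.mpr fun b => ?_
  obtain ⟨c, hc, z, hz, hcz⟩ := mem_sup_of_normal_right.mp ha
  obtain ⟨H, hH, hcH⟩ := exists_fg_mem_commutator_of_mem_commutator_top hc
  let L := H ⊔ closure {a, b}
  have := hln L (hH.sup ((Subgroup.fg_iff _).mpr ⟨{a, b}, rfl, Set.toFinite _⟩))
  have haL : a ∈ L := mem_sup_right (subset_closure (by simp))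
  have hbL : b ∈ L := mem_sup_right (subset_closure (by simp))
  have hcL : c ∈ map L.subtype ⁅zpowers (⟨a, haL⟩ : L), ⊤⁆ := by
    rw [map_commutator, MonoidHom.map_zpowers, ← MonoidHom.range_eq_map, range_subtype]
    exact commutator_mono le_rfl le_sup_left hcH
  obtain ⟨c', hc', rfl⟩ := hcL
  have hzL : z ∈ L := by
    rw [← inv_mul_cancel_left (c' : G) z]
    exact mul_mem (inv_mem c'.2) (hcz ▸ zpow_mem haL n)
  have hz' : (⟨z, hzL⟩ : L) ∈ center L :=
    mem_center_iff.mpr fun x => Subtype.ext (mem_center_iff.mp hz x)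
  have haL' := Subgroup.mem_center_of_zpow_mem_commutator_sup_center (hG.subgroup L) hn
    (mem_sup_of_normal_right.mpr ⟨c', hc', _, hz', Subtype.ext hcz⟩)
  exact congrArg Subtype.val (mem_center_iff.mp haL' ⟨b, hbL⟩)

theorem mem_center_of_mk_zpow_mem (hln : Group.IsLocallyNilpotent G)
    (hG : Monoid.IsTorsionFree G) {g : G} {n : ℤ} (hn : n ≠ 0)
    (hg : (g : G ⧸ center G) ^ n ∈
      ⁅normalClosure {(g : G ⧸ center G)}, (⊤ : Subgroup (G ⧸ center G))⁆) :
    g ∈ center G := by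
  refine hln.mem_center_of_zpow_mem_commutator_sup_center hG hn (sup_le_sup_right
    (commutator_normalClosure_singleton_le fun y =>
      commutator_mem_commutator (mem_zpowers g) (mem_top y)) _ ?_)
  rw [← QuotientGroup.ker_mk' (center G),
    ← comap_commutator_normalClosure_singleton (QuotientGroup.mk'_surjective _), mem_comap,
    map_zpow]
  exact hg

end Group.IsLocallyNilpotent

theorem MagnusProperty.isConj_mk_of_inv_zpow_mul_mem {G : Type*} [Group G]
    (hG : MagnusProperty G) {g h : G} {k : ℤ} (hk : k * k = 1)
    (hN : normalClosure {(g : G ⧸ center G)} = normalClosure {(h : G ⧸ center G)})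
    (hgh : ((g : G ⧸ center G) ^ k)⁻¹ * h ∈
      ⁅normalClosure {(g : G ⧸ center G)}, (⊤ : Subgroup (G ⧸ center G))⁆) :
    IsConj (g : G ⧸ center G) h ∨ IsConj (g : G ⧸ center G) (h : G ⧸ center G)⁻¹ := by
  let π := QuotientGroup.mk' (center G)
  have hπ : Function.Surjective π := QuotientGroup.mk'_surjective _
  obtain ⟨c, hc, hch⟩ : (π g ^ k)⁻¹ * π h ∈ map π ⁅normalClosure {g}, ⊤⁆ := by
    rwa [map_commutator_normalClosure_singleton hπ]
  have hh : π (g ^ k * c) = π h := by rw [map_mul, hch, map_zpow, mul_inv_cancel_left]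
  have hN' : normalClosure {π g} = normalClosure {π (g ^ k * c)} := by rw [hh]; exact hN
  have hle := normalClosure_le_sup_ker_of_normalClosure_map_eq hπ hN'
  rw [QuotientGroup.ker_mk'] at hle
  rcases hG g _ (normalClosure_eq_normalClosure_zpow_mul hk hc hle) with hconj | hconj
  · have := π.map_isConj hconj
    rw [hh] at this
    exact .inl this
  · have := π.map_isConj hconj
    rw [map_inv, hh] at this
    exact .inr this

theorem magnus_quotient_centre_of_locally_nilpotent (G : Type*) [Group G]
    (htf : Monoid.IsTorsionFree G)
    (hln : ∀ H : Subgroup G, H.FG → Group.IsNilpotent H)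
    (hG : MagnusProperty G) :
    MagnusProperty (G ⧸ Subgroup.center G) := by
  intro gbar hbar hN
  obtain ⟨g, rfl⟩ := QuotientGroup.mk_surjective gbar
  obtain ⟨h, rfl⟩ := QuotientGroup.mk_surjective hbar
  have hgen (a y : G ⧸ center G) : ⁅a, y⁆ ∈ ⁅normalClosure {a}, ⊤⁆ :=
    commutator_mem_commutator (subset_normalClosure (Set.mem_singleton a)) (mem_top y)
  have hhg : (h : G ⧸ center G) ∈ normalClosure {↑g} := hN ▸ subset_normalClosure rfl
  have hgh : (g : G ⧸ center G) ∈ normalClosure {↑h} := hN ▸ subset_normalClosure rfl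
  obtain ⟨k, hk⟩ := exists_mk_eq_zpow_of_mem_normalClosure (hgen _) hhg
  obtain ⟨l, hl⟩ := exists_mk_eq_zpow_of_mem_normalClosure (hgen _) hgh
  rw [← hN] at hl
  by_cases hkl : k * l = 1
  · have hkk : k * k = 1 := by
      rcases Int.eq_one_or_neg_one_of_mul_eq_one hkl with rfl | rfl <;> rfl
    refine MagnusProperty.isConj_mk_of_inv_zpow_mul_mem hG hkk hN ?_
    rw [← QuotientGroup.eq, QuotientGroup.mk_zpow]
    exact hk.symm
  · have hg : (g : G ⧸ center G) = 1 := by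
      refine (QuotientGroup.eq_one_iff g).mpr (Group.IsLocallyNilpotent.mem_center_of_mk_zpow_mem
        hln htf (sub_ne_zero.mpr hkl) ?_)
      rw [← QuotientGroup.eq_one_iff, QuotientGroup.mk_zpow, zpow_sub_one, zpow_mul, ← hk,
        ← hl, mul_inv_cancel]
    have hh : (h : G ⧸ center G) ∈ normalClosure {↑h} := subset_normalClosure rfl
    rw [← hN, hg, normalClosure_eq_bot_iff.mpr (by simp), mem_bot] at hh
    exact .inl (by rw [hg, hh])
end

section
/- For every c ≥ 1, the group G = ⟨t, a | a^{3^c} = 1, [a,t] = a³⟩ ≅ C_∞ ⋉ C_{3^c} (where t acts on a by a^t = a⁴) is nilpotent of class exactly c and has the Magnus property. -/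
/-- `4` as a unit of `ZMod (3^c)`. -/
def fourUnit (c : ℕ) : (ZMod (3 ^ c))ˣ :=
  ZMod.unitOfCoprime 4 (Nat.Coprime.pow_right c (by norm_num))

/-- The action of `C_∞ = Multiplicative ℤ` on `C_{3^c}` with the generator `t`
acting by `a ↦ a⁴`. -/
def phiFour (c : ℕ) : Multiplicative ℤ →* MulAut (Multiplicative (ZMod (3 ^ c))) :=
  zpowersHom _ (AddEquiv.toMultiplicative (AddAut.mulLeft (fourUnit c)))

/-- The group `G = C_∞ ⋉ C_{3^c} = ⟨t, a ∣ a^{3^c} = 1, aᵗ = a⁴⟩`. -/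
abbrev GpExample (c : ℕ) : Type :=
  SemidirectProduct (Multiplicative (ZMod (3 ^ c))) (Multiplicative ℤ) (phiFour c)

/-!
Write `R ⋊ ℤ`, the generator of `ℤ` acting by a unit `u`, as pairs `mk x n`. A commutator
`⁅mk w s, mk x n⁆` is `mk ((u ^ s - 1) x + (1 - u ^ n) w) 0`, so inductively the lower central
series is `γ (i + 1) = (u - 1) ^ (i + 1) R × {0}`; for `R = ZMod (3 ^ c)` and `u = 4` this is
`3 ^ (i + 1) R`, which vanishes exactly when `c ≤ i + 1`.

The normal closure of `mk a n` lies in `{mk x (k n) | x - k a ∈ ((u - 1) a, 1 - u ^ n)}`.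
In `ZMod (3 ^ c)` the powers of `4` are exactly the elements `1 + 3 y`, so `mk b n` is conjugate
to `mk a n` as soon as `b - a` lies in that ideal. If `mk a n` and `mk b m` have the same normal
closure, then `m = ± n`, and (looking at `k mod 3` when `n = 0`) `b ∓ a` lies in the ideal, which
makes `mk b m` conjugate to `mk a n` or to its inverse.
-/

open scoped commutatorElement

variable {R : Type*} [CommRing R]

def unitPowAction (u : Rˣ) : Multiplicative ℤ →* MulAut (Multiplicative R) :=
  zpowersHom _ (AddEquiv.toMultiplicative (AddAut.mulLeft u))

/-- `GpExample c` is `UnitSemidirect (fourUnit c)` by definition. -/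
abbrev UnitSemidirect (u : Rˣ) : Type _ :=
  SemidirectProduct (Multiplicative R) (Multiplicative ℤ) (unitPowAction u)

theorem Units.sub_one_dvd_zpow_sub_one (v : Rˣ) (k : ℤ) : (v : R) - 1 ∣ ↑(v ^ k) - 1 := by
  obtain ⟨n, rfl | rfl⟩ := k.eq_nat_or_neg
  · simpa using sub_one_dvd_pow_sub_one (v : R) n
  · have h : (↑(v ^ (-(n : ℤ))) : R) - 1 = -↑(v ^ (-(n : ℤ))) * ((v : R) ^ n - 1) := by
      rw [mul_sub, mul_one, neg_mul, ← Units.val_pow_eq_pow_val, ← Units.val_mul, ← zpow_natCast,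
        ← zpow_add, neg_add_cancel, zpow_zero, Units.val_one]; ring
    rw [h]
    exact dvd_mul_of_dvd_right (sub_one_dvd_pow_sub_one _ n) _

theorem dvd_sub_or_dvd_add_of_dvd_sub_intCast_mul {a b : R} {k l : ℤ}
    (hb : 3 * a ∣ b - k * a) (ha : 3 * b ∣ a - l * b) : 3 * a ∣ b - a ∨ 3 * a ∣ b + a := by
  obtain ⟨j, rfl | rfl | rfl⟩ : ∃ j, k = 3 * j ∨ k = 3 * j + 1 ∨ k = 3 * j - 1 :=
    ⟨(k + 1) / 3, by omega⟩
  · have hba : 3 * a ∣ b := by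
      convert dvd_add hb (dvd_mul_right (3 * a) (j : R)) using 1; push_cast; ring
    have hab : 3 * a ∣ a := by
      convert dvd_add (hba.trans (dvd_mul_left b 3) |>.trans ha) (hba.mul_left (l : R)) using 1
      ring
    exact .inl (dvd_sub hba hab)
  · left
    convert dvd_add hb (dvd_mul_right (3 * a) (j : R)) using 1; push_cast; ring
  · right
    convert dvd_add hb (dvd_mul_right (3 * a) (j : R)) using 1; push_cast; ring

namespace UnitSemidirect

variable {u : Rˣ}

theorem unitPowAction_apply (n : ℤ) (x : R) :
    unitPowAction u (.ofAdd n) (.ofAdd x) = .ofAdd (↑(u ^ n) * x) := by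
  have hhom : AddEquiv.toMultiplicative (AddAut.mulLeft u) =
      ((MulAutMultiplicative (G := R)).symm.toMonoidHom.comp AddAut.mulLeft) u := rfl
  rw [unitPowAction, zpowersHom_apply, hhom, ← map_zpow]
  rfl

/-- The element `a ^ x * t ^ n`. -/
def mk (x : R) (n : ℤ) : UnitSemidirect u := ⟨.ofAdd x, .ofAdd n⟩

theorem exists_eq_mk (g : UnitSemidirect u) : ∃ x n, g = mk x n := ⟨_, _, rfl⟩

theorem mk_inj {x y : R} {n m : ℤ} : (mk x n : UnitSemidirect u) = mk y m ↔ x = y ∧ n = m := by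
  simp [mk, SemidirectProduct.ext_iff]

theorem one_eq_mk : (1 : UnitSemidirect u) = mk 0 0 := rfl

theorem mk_mul (x y : R) (n m : ℤ) :
    (mk x n * mk y m : UnitSemidirect u) = mk (x + ↑(u ^ n) * y) (n + m) := by
  ext
  · simp [mk, unitPowAction_apply]
  · rfl

theorem mk_inv (x : R) (n : ℤ) :
    (mk x n : UnitSemidirect u)⁻¹ = mk (-(↑(u ^ (-n)) * x)) (-n) := by
  rw [inv_eq_iff_mul_eq_one, mk_mul, one_eq_mk, mk_inj, zpow_neg]
  constructor
  · linear_combination (-x) * Units.mul_inv (u ^ n)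
  · exact add_neg_cancel n

theorem mk_conj (w x : R) (s n : ℤ) :
    (mk w s * mk x n * (mk w s)⁻¹ : UnitSemidirect u) =
      mk (↑(u ^ s) * x + (1 - ↑(u ^ n)) * w) n := by
  simp only [mk_inv, mk_mul, zpow_add, zpow_neg, Units.val_mul, mk_inj]
  constructor
  · linear_combination (-(w * ↑(u ^ n))) * Units.mul_inv (u ^ s)
  · ring

theorem commutatorElement_mk (w x : R) (s n : ℤ) :
    ⁅(mk w s : UnitSemidirect u), (mk x n : UnitSemidirect u)⁆ =
      mk ((↑(u ^ s) - 1) * x + (1 - ↑(u ^ n)) * w) 0 := by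
  rw [commutatorElement_def, mk_conj, mk_inv, mk_mul, mk_inj, zpow_neg]
  constructor
  · linear_combination (-x) * Units.mul_inv (u ^ n)
  · exact add_neg_cancel n

def idealSubgroup (u : Rˣ) (I : Ideal R) : Subgroup (UnitSemidirect u) :=
  (AddSubgroup.toSubgroup I.toAddSubgroup).map SemidirectProduct.inl

theorem mk_mem_idealSubgroup {I : Ideal R} {x : R} {n : ℤ} :
    mk x n ∈ idealSubgroup u I ↔ n = 0 ∧ x ∈ I := by
  simp only [idealSubgroup, mk, Subgroup.mem_map, SemidirectProduct.ext_iff]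
  simp [and_comm, eq_comm (a := (1 : Multiplicative ℤ))]

theorem idealSubgroup_eq_bot_iff {I : Ideal R} : idealSubgroup u I = ⊥ ↔ I = ⊥ := by
  rw [idealSubgroup, Subgroup.map_eq_bot_iff_of_injective _ SemidirectProduct.inl_injective,
    map_eq_bot_iff, ← Submodule.bot_toAddSubgroup (R := R), Submodule.toAddSubgroup_inj]

theorem commutator_top_top :
    ⁅(⊤ : Subgroup (UnitSemidirect u)), ⊤⁆ = idealSubgroup u (Ideal.span {(u : R) - 1}) := by
  apply le_antisymm
  · rw [Subgroup.commutator_le]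
    rintro g - h -
    obtain ⟨w, s, rfl⟩ := exists_eq_mk g
    obtain ⟨x, n, rfl⟩ := exists_eq_mk h
    rw [commutatorElement_mk, mk_mem_idealSubgroup, Ideal.mem_span_singleton]
    refine ⟨rfl, dvd_add (dvd_mul_of_dvd_left (u.sub_one_dvd_zpow_sub_one s) _)
      (dvd_mul_of_dvd_left ?_ _)⟩
    rw [← dvd_neg, neg_sub]
    exact u.sub_one_dvd_zpow_sub_one n
  · intro g hg
    obtain ⟨x, n, rfl⟩ := exists_eq_mk g
    rw [mk_mem_idealSubgroup, Ideal.mem_span_singleton] at hg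
    obtain ⟨rfl, r, rfl⟩ := hg
    have := Subgroup.commutator_mem_commutator (Subgroup.mem_top (mk 0 1 : UnitSemidirect u))
      (Subgroup.mem_top (mk r 0))
    simpa [commutatorElement_mk] using this

theorem commutator_idealSubgroup_span_top (d : R) :
    ⁅idealSubgroup u (Ideal.span {d}), ⊤⁆ = idealSubgroup u (Ideal.span {((u : R) - 1) * d}) := by
  apply le_antisymm
  · rw [Subgroup.commutator_le]
    rintro g hg h -
    obtain ⟨x, n, rfl⟩ := exists_eq_mk g
    obtain ⟨w, s, rfl⟩ := exists_eq_mk h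
    rw [mk_mem_idealSubgroup, Ideal.mem_span_singleton] at hg
    obtain ⟨rfl, r, rfl⟩ := hg
    rw [commutatorElement_mk, mk_mem_idealSubgroup, Ideal.mem_span_singleton]
    refine ⟨rfl, ?_⟩
    obtain ⟨e, he⟩ := u.sub_one_dvd_zpow_sub_one s
    exact ⟨-(e * r), by simp only [zpow_zero, Units.val_one]; linear_combination (-(d * r)) * he⟩
  · intro g hg
    obtain ⟨x, n, rfl⟩ := exists_eq_mk g
    rw [mk_mem_idealSubgroup, Ideal.mem_span_singleton] at hg
    obtain ⟨rfl, r, rfl⟩ := hg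
    rw [Subgroup.commutator_comm]
    have := Subgroup.commutator_mem_commutator (Subgroup.mem_top (mk 0 1 : UnitSemidirect u))
      (mk_mem_idealSubgroup.mpr ⟨rfl, Ideal.mem_span_singleton.mpr (dvd_mul_right d r)⟩)
    simpa [commutatorElement_mk, mul_assoc] using this

theorem lowerCentralSeries_succ (i : ℕ) :
    (⊤ : Subgroup (UnitSemidirect u)).lowerCentralSeries (i + 1) =
      idealSubgroup u (Ideal.span {((u : R) - 1) ^ (i + 1)}) := by
  induction i with
  | zero => simpa using commutator_top_top
  | succ i ih =>
    rw [Subgroup.lowerCentralSeries_succ, ih, commutator_idealSubgroup_span_top,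
      pow_succ' _ (i + 1)]

theorem lowerCentralSeries_succ_eq_bot_iff (i : ℕ) :
    (⊤ : Subgroup (UnitSemidirect u)).lowerCentralSeries (i + 1) = ⊥ ↔
      ((u : R) - 1) ^ (i + 1) = 0 := by
  rw [lowerCentralSeries_succ, idealSubgroup_eq_bot_iff, Ideal.span_singleton_eq_bot]

def closureIdeal (u : Rˣ) (a : R) (n : ℤ) : Ideal R :=
  Ideal.span {((u : R) - 1) * a, 1 - (↑(u ^ n) : R)}

theorem sub_one_mul_mem_closureIdeal (a : R) (n : ℤ) : ((u : R) - 1) * a ∈ closureIdeal u a n :=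
  Ideal.subset_span (Set.mem_insert _ _)

theorem one_sub_zpow_mem_closureIdeal (a : R) (n : ℤ) : (1 : R) - ↑(u ^ n) ∈ closureIdeal u a n :=
  Ideal.subset_span (Set.mem_insert_of_mem _ rfl)

theorem zpow_sub_one_mul_mem_closureIdeal (a r : R) (n s : ℤ) :
    (↑(u ^ s) - 1) * (r * a) ∈ closureIdeal u a n := by
  obtain ⟨e, he⟩ := u.sub_one_dvd_zpow_sub_one s
  rw [he, show ((u : R) - 1) * e * (r * a) = e * r * (((u : R) - 1) * a) by ring]
  exact Ideal.mul_mem_left _ _ (sub_one_mul_mem_closureIdeal a n)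

theorem one_sub_zpow_mul_mem_closureIdeal (a r : R) (n k : ℤ) :
    (1 - ↑(u ^ (k * n))) * r ∈ closureIdeal u a n := by
  obtain ⟨e, he⟩ := (u ^ n).sub_one_dvd_zpow_sub_one k
  rw [mul_comm k, zpow_mul, show (1 : R) - ↑((u ^ n) ^ k) = -(↑((u ^ n) ^ k) - 1) by ring, he,
    show -((↑(u ^ n) - 1) * e) * r = e * r * (1 - ↑(u ^ n)) by ring]
  exact Ideal.mul_mem_left _ _ (one_sub_zpow_mem_closureIdeal a n)

/-- In fact equal to the normal closure of `mk a n`; the inclusion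
`normalClosure_le_closureSubgroup` suffices for the Magnus property. -/
def closureSubgroup (u : Rˣ) (a : R) (n : ℤ) : Subgroup (UnitSemidirect u) where
  carrier := {g | ∃ k : ℤ, ∃ x, x - k * a ∈ closureIdeal u a n ∧ g = mk x (k * n)}
  one_mem' := ⟨0, 0, by simp, by simp [one_eq_mk]⟩
  mul_mem' := by
    rintro _ _ ⟨k, x, hx, rfl⟩ ⟨l, y, hy, rfl⟩
    refine ⟨k + l, _, ?_, by rw [mk_mul, add_mul]⟩
    have h : x + ↑(u ^ (k * n)) * y - ↑(k + l) * a =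
        (x - k * a) + ↑(u ^ (k * n)) * (y - l * a) + (↑(u ^ (k * n)) - 1) * (l * a) := by
      push_cast; ring
    rw [h]
    exact add_mem (add_mem hx (Ideal.mul_mem_left _ _ hy))
      (zpow_sub_one_mul_mem_closureIdeal _ _ _ _)
  inv_mem' := by
    rintro _ ⟨k, x, hx, rfl⟩
    refine ⟨-k, _, ?_, by rw [mk_inv, neg_mul]⟩
    have h : -(↑(u ^ (-(k * n))) * x) - ↑(-k) * a =
        -↑(u ^ (-(k * n))) * (x - k * a) - (↑(u ^ (-(k * n))) - 1) * (k * a) := by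
      push_cast; ring
    rw [h]
    exact sub_mem (Ideal.mul_mem_left _ _ hx) (zpow_sub_one_mul_mem_closureIdeal _ _ _ _)

theorem mk_mem_closureSubgroup {a x : R} {n m : ℤ} :
    mk x m ∈ closureSubgroup u a n ↔ ∃ k : ℤ, m = k * n ∧ x - k * a ∈ closureIdeal u a n := by
  constructor
  · rintro ⟨k, y, hy, h⟩
    obtain ⟨rfl, rfl⟩ := mk_inj.mp h
    exact ⟨k, rfl, hy⟩
  · rintro ⟨k, rfl, hk⟩
    exact ⟨k, x, hk, rfl⟩

instance closureSubgroup_normal (a : R) (n : ℤ) : (closureSubgroup u a n).Normal where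
  conj_mem := by
    rintro _ ⟨k, x, hx, rfl⟩ g
    obtain ⟨w, s, rfl⟩ := exists_eq_mk g
    rw [mk_conj, mk_mem_closureSubgroup]
    refine ⟨k, rfl, ?_⟩
    have h : ↑(u ^ s) * x + (1 - ↑(u ^ (k * n))) * w - k * a =
        ↑(u ^ s) * (x - k * a) + (↑(u ^ s) - 1) * (k * a) + (1 - ↑(u ^ (k * n))) * w := by ring
    rw [h]
    exact add_mem (add_mem (Ideal.mul_mem_left _ _ hx) (zpow_sub_one_mul_mem_closureIdeal _ _ _ _))
      (one_sub_zpow_mul_mem_closureIdeal _ _ _ _)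

theorem normalClosure_le_closureSubgroup (a : R) (n : ℤ) :
    Subgroup.normalClosure {mk a n} ≤ closureSubgroup u a n :=
  Subgroup.normalClosure_le_normal <| Set.singleton_subset_iff.mpr <|
    mk_mem_closureSubgroup.mpr ⟨1, (one_mul n).symm, by simp⟩

theorem isConj_mk_of_sub_mem (hu : ∀ y : R, ∃ s : ℤ, (↑(u ^ s) : R) = 1 + ((u : R) - 1) * y)
    {a b : R} {n : ℤ} (h : b - a ∈ closureIdeal u a n) :
    IsConj (mk a n : UnitSemidirect u) (mk b n) := by
  rw [closureIdeal, Ideal.mem_span_pair] at h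
  obtain ⟨y, z, hyz⟩ := h
  obtain ⟨s, hs⟩ := hu y
  refine isConj_iff.mpr ⟨mk z s, ?_⟩
  rw [mk_conj, mk_inj]
  exact ⟨by linear_combination a * hs + hyz, rfl⟩

theorem isConj_mk_inv_of_add_mem (hu : ∀ y : R, ∃ s : ℤ, (↑(u ^ s) : R) = 1 + ((u : R) - 1) * y)
    {a b : R} {n : ℤ} (h : b + a ∈ closureIdeal u a n) :
    IsConj (mk a n : UnitSemidirect u) (mk b (-n))⁻¹ := by
  rw [mk_inv, neg_neg]
  apply isConj_mk_of_sub_mem hu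
  have h' : -(↑(u ^ n) * b) - a = -↑(u ^ n) * (b + a) - a * (1 - ↑(u ^ n)) := by ring
  rw [h']
  exact sub_mem (Ideal.mul_mem_left _ _ h)
    (Ideal.mul_mem_left _ _ (one_sub_zpow_mem_closureIdeal a n))

theorem closureIdeal_zero (a : R) : closureIdeal u a 0 = Ideal.span {((u : R) - 1) * a} := by
  simp [closureIdeal]

theorem magnusProperty (h3 : (u : R) - 1 = 3)
    (hu : ∀ y : R, ∃ s : ℤ, (↑(u ^ s) : R) = 1 + ((u : R) - 1) * y) :
    MagnusProperty (UnitSemidirect u) := by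
  intro g h hgh
  obtain ⟨a, n, rfl⟩ := exists_eq_mk g
  obtain ⟨b, m, rfl⟩ := exists_eq_mk h
  have hb : mk b m ∈ Subgroup.normalClosure {(mk a n : UnitSemidirect u)} :=
    hgh ▸ Subgroup.subset_normalClosure rfl
  have ha : mk a n ∈ Subgroup.normalClosure {(mk b m : UnitSemidirect u)} :=
    hgh ▸ Subgroup.subset_normalClosure rfl
  obtain ⟨k, rfl, hk⟩ := mk_mem_closureSubgroup.mp (normalClosure_le_closureSubgroup a n hb)
  obtain ⟨l, hl, hl'⟩ := mk_mem_closureSubgroup.mp (normalClosure_le_closureSubgroup _ _ ha)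
  suffices (k * n = n ∧ b - a ∈ closureIdeal u a n) ∨ (k * n = -n ∧ b + a ∈ closureIdeal u a n) by
    rcases this with ⟨hkn, hba⟩ | ⟨hkn, hba⟩
    · exact .inl (by rw [hkn]; exact isConj_mk_of_sub_mem hu hba)
    · exact .inr (by rw [hkn]; exact isConj_mk_inv_of_add_mem hu hba)
  rcases eq_or_ne n 0 with rfl | hn
  · simp only [mul_zero, neg_zero, true_and, closureIdeal_zero, h3,
      Ideal.mem_span_singleton] at hk hl' ⊢
    exact dvd_sub_or_dvd_add_of_dvd_sub_intCast_mul hk hl'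
  · have hlk : l * k = 1 := by
      have : n * (l * k - 1) = 0 := by linear_combination -hl
      simpa [hn, sub_eq_zero] using this
    rcases Int.eq_one_or_neg_one_of_mul_eq_one' hlk with ⟨-, rfl⟩ | ⟨-, rfl⟩
    · exact .inl ⟨one_mul n, by simpa using hk⟩
    · exact .inr ⟨neg_one_mul n, by simpa using hk⟩

end UnitSemidirect

theorem ZMod.natCast_pow_eq_zero_iff {p : ℕ} (hp : 1 < p) (c i : ℕ) :
    (p : ZMod (p ^ c)) ^ i = 0 ↔ c ≤ i := by
  rw [← Nat.cast_pow, ZMod.natCast_eq_zero_iff, Nat.pow_dvd_pow_iff_le_right hp]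

theorem ZMod.exists_one_add_prime_pow_eq {p : ℕ} (hp : p.Prime) (hp2 : p ≠ 2) (c : ℕ)
    (y : ZMod (p ^ c)) : ∃ s : ℕ, (1 + p : ZMod (p ^ c)) ^ s = 1 + p * y := by
  obtain _ | n := c
  · exact ⟨0, (ZMod.subsingleton_iff.mpr (pow_zero p)).elim _ _⟩
  have : NeZero (p ^ (n + 1)) := ⟨pow_ne_zero _ hp.ne_zero⟩
  -- `P` has `p ^ n` elements since `1 + p` has order `p ^ n`, and it lies in `T`, which has at most
  -- `p ^ n` elements and contains every `1 + p * y`.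
  set T := (Finset.range (p ^ n)).image fun k : ℕ => (1 + p * k : ZMod (p ^ (n + 1)))
  set P := (Finset.range (p ^ n)).image fun s : ℕ => (1 + p : ZMod (p ^ (n + 1))) ^ s
  have hT (y : ZMod (p ^ (n + 1))) : 1 + p * y ∈ T := by
    refine Finset.mem_image.mpr ⟨y.val % p ^ n, Finset.mem_range.mpr
      (Nat.mod_lt _ (pow_pos hp.pos n)), ?_⟩
    have h := congrArg (fun k : ℕ => (k : ZMod (p ^ (n + 1)))) (Nat.mod_add_div y.val (p ^ n))
    simp only [Nat.cast_add, Nat.cast_mul, Nat.cast_pow, ZMod.natCast_zmod_val] at h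
    have hp0 : (p : ZMod (p ^ (n + 1))) ^ (n + 1) = 0 := by
      exact_mod_cast ZMod.natCast_self (p ^ (n + 1))
    linear_combination (p : ZMod (p ^ (n + 1))) * h -
      ((y.val / p ^ n : ℕ) : ZMod (p ^ (n + 1))) * hp0
  have hPT : P ⊆ T := by
    intro x hx
    obtain ⟨s, -, rfl⟩ := Finset.mem_image.mp hx
    obtain ⟨z, hz⟩ := sub_one_dvd_pow_sub_one (1 + p : ZMod (p ^ (n + 1))) s
    rw [add_sub_cancel_left] at hz
    exact (eq_add_of_sub_eq' hz) ▸ hT z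
  have hP : P.card = p ^ n := by
    have hord := ZMod.orderOf_one_add_prime hp hp2 n
    rw [Finset.card_image_of_injOn (by rw [Finset.coe_range, ← hord]; exact pow_injOn_Iio_orderOf),
      Finset.card_range]
  have hPT' : P = T := Finset.eq_of_subset_of_card_le hPT
    (hP ▸ Finset.card_image_le.trans (Finset.card_range _).le)
  obtain ⟨s, -, hs⟩ := Finset.mem_image.mp (hPT' ▸ hT y)
  exact ⟨s, hs⟩

theorem val_fourUnit (c : ℕ) : (fourUnit c : ZMod (3 ^ c)) = 1 + 3 := by
  rw [fourUnit, ZMod.coe_unitOfCoprime]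
  norm_num

theorem exists_zpow_fourUnit_eq (c : ℕ) (y : ZMod (3 ^ c)) :
    ∃ s : ℤ, (↑(fourUnit c ^ s) : ZMod (3 ^ c)) = 1 + ((fourUnit c : ZMod (3 ^ c)) - 1) * y := by
  obtain ⟨s, hs⟩ := ZMod.exists_one_add_prime_pow_eq Nat.prime_three (by norm_num) c y
  refine ⟨s, ?_⟩
  rw [zpow_natCast, Units.val_pow_eq_pow_val, val_fourUnit, add_sub_cancel_left]
  exact_mod_cast hs

theorem GpExample_nilpotent_class_c_and_magnus (c : ℕ) (hc : 1 ≤ c) :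
    Group.IsNilpotent (GpExample c) ∧
    (⊤ : Subgroup (GpExample c)).lowerCentralSeries c = ⊥ ∧
    (⊤ : Subgroup (GpExample c)).lowerCentralSeries (c - 1) ≠ ⊥ ∧
    MagnusProperty (GpExample c) := by
  have hu3 : (fourUnit c : ZMod (3 ^ c)) - 1 = 3 := by rw [val_fourUnit]; ring
  have hlcs (i : ℕ) :
      (⊤ : Subgroup (GpExample c)).lowerCentralSeries (i + 1) = ⊥ ↔ c ≤ i + 1 := by
    refine (UnitSemidirect.lowerCentralSeries_succ_eq_bot_iff (u := fourUnit c) i).trans ?_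
    rw [hu3]
    exact_mod_cast ZMod.natCast_pow_eq_zero_iff (by norm_num) c (i + 1)
  obtain ⟨j, rfl⟩ := Nat.exists_eq_add_of_le' hc
  have hbot := (hlcs j).mpr le_rfl
  refine ⟨Subgroup.nilpotent_iff_lowerCentralSeries.mpr ⟨_, hbot⟩, hbot, ?_,
    UnitSemidirect.magnusProperty hu3 (exists_zpow_fourUnit_eq _)⟩
  rw [Nat.add_sub_cancel]
  obtain _ | i := j
  · have : Nontrivial (GpExample 1) := SemidirectProduct.inr_injective.nontrivial
    exact top_ne_bot
  · exact fun h => absurd ((hlcs i).mp h) (by omega)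
end

section
/- Let G be a group such that Z(G) and G/Z(G) both have the Magnus property, and suppose that for every g ∈ G \ Z(G) the set { [g,w] : w ∈ G } contains ⟨g⟩^G ∩ Z(G). Then G has the Magnus property. -/
/-!
If `g` is central, so is every element with the same normal closure, and the normal closure of
`g` is just the cyclic group `⟨g⟩`, the same in `G` as in `Z(G)`; so the Magnus property of `Z(G)`
applies, and conjugacy in the abelian group `Z(G)` is equality.

If `g` is not central, the Magnus property of `G/Z(G)` lets us replace `h` (or `h⁻¹`) by a
conjugate `h'` with `g⁻¹h' ∈ Z(G)`. Since also `g⁻¹h' ∈ ⟨g⟩^G`, the hypothesis writes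
`g⁻¹h' = [g, w]`, that is `h' = w⁻¹gw`.
-/

open Subgroup

section

variable {G : Type*} [Group G]

theorem IsConj.normalClosure_singleton_eq {g h : G} (hc : IsConj g h) :
    normalClosure ({g} : Set G) = normalClosure {h} := by
  simp only [normalClosure, Group.conjugatesOfSet, Set.mem_singleton_iff,
    Set.iUnion_iUnion_eq_left, isConj_iff_conjugatesOf_eq.mp hc]

theorem normalClosure_singleton_inv (g : G) :
    normalClosure ({g⁻¹} : Set G) = normalClosure {g} := by
  refine le_antisymm (normalClosure_le_normal ?_) (normalClosure_le_normal ?_) <;>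
    simp only [Set.singleton_subset_iff]
  · exact inv_mem (subset_normalClosure rfl)
  · simpa using inv_mem (subset_normalClosure (Set.mem_singleton g⁻¹))

theorem normalClosure_singleton_eq_closure_of_mem_center {g : G} (hg : g ∈ center G) :
    normalClosure ({g} : Set G) = Subgroup.closure {g} := by
  refine congrArg Subgroup.closure (Set.ext fun x => ?_)
  simp only [Group.mem_conjugatesOfSet_iff, Set.mem_singleton_iff, exists_eq_left]
  exact ⟨fun hx => (hx.eq_of_left_mem_center hg).symm, fun hx => hx ▸ IsConj.refl g⟩

theorem normalClosure_singleton_map_eq {H : Type*} [Group H] {f : G →* H}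
    (hf : Function.Surjective f) {g h : G}
    (hnc : normalClosure ({g} : Set G) = normalClosure {h}) :
    normalClosure ({f g} : Set H) = normalClosure {f h} := by
  simpa only [map_normalClosure _ f hf, Set.image_singleton] using congrArg (map f) hnc

theorem exists_isConj_and_map_eq_of_isConj_map {H : Type*} [Group H] {f : G →* H}
    (hf : Function.Surjective f) {g h : G} (hc : IsConj (f g) (f h)) :
    ∃ h', IsConj h' h ∧ f g = f h' := by
  obtain ⟨c, hc⟩ := isConj_iff.mp hc
  obtain ⟨x, rfl⟩ := hf c
  refine ⟨x⁻¹ * h * x, isConj_iff.mpr ⟨x, by group⟩, ?_⟩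
  rw [map_mul, map_mul, map_inv, ← hc]
  group

open scoped IsMulCommutative in
theorem eq_or_eq_inv_of_normalClosure_eq_of_mem_center (hZ : MagnusProperty (center G))
    {g h : G} (hg : g ∈ center G) (hh : h ∈ center G)
    (hnc : normalClosure ({g} : Set G) = normalClosure {h}) :
    g = h ∨ g = h⁻¹ := by
  have map_normalClosure_subtype (x : center G) :
      (normalClosure ({x} : Set (center G))).map (center G).subtype = normalClosure {(x : G)} := by
    rw [normalClosure_singleton_eq_closure_of_mem_center x.2,
      normalClosure_singleton_eq_closure_of_mem_center (by simp [center_eq_top]),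
      MonoidHom.map_closure, Set.image_singleton, coe_subtype]
  have hZnc : normalClosure ({⟨g, hg⟩} : Set (center G)) = normalClosure {⟨h, hh⟩} :=
    map_injective (center G).subtype_injective (by
      rw [map_normalClosure_subtype, map_normalClosure_subtype]; exact hnc)
  simpa only [isConj_iff_eq, Subtype.ext_iff, InvMemClass.coe_inv] using hZ _ _ hZnc

variable {N : Subgroup G} {g h : G}

theorem isConj_of_mk_eq
    (hg : ∀ z ∈ normalClosure ({g} : Set G) ⊓ N, ∃ w : G, g⁻¹ * w⁻¹ * g * w = z)
    (hnc : normalClosure ({g} : Set G) = normalClosure {h}) (hgh : (g : G ⧸ N) = h) :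
    IsConj g h := by
  have hz : g⁻¹ * h ∈ normalClosure ({g} : Set G) ⊓ N :=
    mem_inf.mpr ⟨mul_mem (inv_mem (subset_normalClosure rfl)) (hnc ▸ subset_normalClosure rfl),
      QuotientGroup.eq.mp hgh⟩
  obtain ⟨w, hw⟩ := hg _ hz
  have hw' : g⁻¹ * (w⁻¹ * g * w) = g⁻¹ * h := by simpa only [mul_assoc] using hw
  exact isConj_iff.mpr ⟨w⁻¹, by simpa only [inv_inv] using mul_left_cancel hw'⟩

theorem isConj_of_isConj_mk [N.Normal]
    (hg : ∀ z ∈ normalClosure ({g} : Set G) ⊓ N, ∃ w : G, g⁻¹ * w⁻¹ * g * w = z)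
    (hnc : normalClosure ({g} : Set G) = normalClosure {h}) (hc : IsConj (g : G ⧸ N) h) :
    IsConj g h := by
  obtain ⟨h', hh', hgh'⟩ :=
    exists_isConj_and_map_eq_of_isConj_map (QuotientGroup.mk'_surjective N) hc
  exact (isConj_of_mk_eq hg (hnc.trans hh'.normalClosure_singleton_eq.symm) hgh').trans hh'

end

theorem magnus_of_centre_and_quotient (G : Type*) [Group G]
    (hZ : MagnusProperty (Subgroup.center G))
    (hQ : MagnusProperty (G ⧸ Subgroup.center G))
    (hcomm : ∀ g : G, g ∉ Subgroup.center G →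
      ∀ z ∈ Subgroup.normalClosure ({g} : Set G) ⊓ Subgroup.center G,
        ∃ w : G, g⁻¹ * w⁻¹ * g * w = z) :
    MagnusProperty G := by
  intro g h hnc
  by_cases hg : g ∈ center G
  · have hh : h ∈ center G :=
      normalClosure_le_normal (Set.singleton_subset_iff.mpr hg) (hnc ▸ subset_normalClosure rfl)
    rcases eq_or_eq_inv_of_normalClosure_eq_of_mem_center hZ hg hh hnc with rfl | rfl
    exacts [Or.inl (IsConj.refl _), Or.inr (IsConj.refl _)]
  · have hQnc := normalClosure_singleton_map_eq (QuotientGroup.mk'_surjective (center G)) hnc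
    refine (hQ _ _ hQnc).imp (isConj_of_isConj_mk (hcomm g hg) hnc) fun hc => ?_
    refine isConj_of_isConj_mk (hcomm g hg) (hnc.trans (normalClosure_singleton_inv h).symm) ?_
    simpa only [QuotientGroup.mk'_apply, QuotientGroup.mk_inv] using hc
end

section
/- Let ζ be a primitive p-th root of unity for a prime p ≥ 5, and let ν = (ζ+1)^{p−1} in the ring of integers ℤ[ζ]. Then ν is a unit of infinite multiplicative order in ℤ[ζ]. -/
/-!
Since `p` is odd, `(1 + ζ) * ∑_{j < (p + 1) / 2} ζ ^ (2 * j) = ∑_{i ≤ p} ζ ^ i = ζ ^ p = 1`, an inverse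
that is a polynomial in `ζ`. If `(1 + ζ) ^ (p - 1)` had finite order, then `|1 + ζ| = |ζ| = 1`,
which pins `ζ` to a primitive cube root of unity, impossible for `p ≥ 5`.
-/

open Finset

theorem one_add_mul_geom_sum_sq {R : Type*} [CommSemiring R] (x : R) (m : ℕ) :
    (1 + x) * ∑ j ∈ range m, (x ^ 2) ^ j = ∑ i ∈ range (2 * m), x ^ i := by
  induction m with
  | zero => simp
  | succ m ih =>
    rw [sum_range_succ, mul_add, ih, Nat.mul_succ, sum_range_succ, sum_range_succ]
    ring

theorem IsPrimitiveRoot.add_one_mul_geom_sum_sq_eq_one {R : Type*} [CommRing R] [IsDomain R]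
    {ζ : R} {n : ℕ} (hζ : IsPrimitiveRoot ζ n) (hn : Odd n) (h1 : 1 < n) :
    (ζ + 1) * ∑ j ∈ range ((n + 1) / 2), (ζ ^ 2) ^ j = 1 := by
  obtain ⟨k, rfl⟩ := hn
  have hsum : ∑ i ∈ range (2 * k + 1), ζ ^ i = 0 := hζ.geom_sum_eq_zero h1
  rw [add_comm ζ, one_add_mul_geom_sum_sq, show 2 * ((2 * k + 1 + 1) / 2) = 2 * k + 1 + 1 by omega,
    sum_range_succ, hsum, zero_add, hζ.pow_eq_one]

theorem Complex.sq_add_self_add_one_eq_zero {z : ℂ} (hz : ‖z‖ = 1) (hz1 : ‖z + 1‖ = 1) :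
    z ^ 2 + z + 1 = 0 := by
  have hconj : z * starRingEnd ℂ z = 1 := by simp [Complex.mul_conj', hz]
  have hconj1 : (z + 1) * (starRingEnd ℂ z + 1) = 1 := by
    simpa [Complex.mul_conj', hz1] using Complex.mul_conj' (z + 1)
  linear_combination z * hconj1 - (z + 1) * hconj

theorem cyclotomic_unit_infinite_order (p : ℕ) (hp : p.Prime) (hp5 : 5 ≤ p)
    (ζ : ℂ) (hζ : IsPrimitiveRoot ζ p) :
    (ζ + 1) ^ (p - 1) ∈ Algebra.adjoin ℤ ({ζ} : Set ℂ) ∧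
    (∃ μ ∈ Algebra.adjoin ℤ ({ζ} : Set ℂ), (ζ + 1) ^ (p - 1) * μ = 1) ∧
    ¬ IsOfFinOrder ((ζ + 1) ^ (p - 1)) := by
  have hζmem : ζ ∈ Algebra.adjoin ℤ ({ζ} : Set ℂ) := Algebra.subset_adjoin rfl
  have hinv := hζ.add_one_mul_geom_sum_sq_eq_one (hp.odd_of_ne_two (by omega)) (by omega)
  refine ⟨pow_mem (add_mem hζmem (one_mem _)) _, ⟨_, pow_mem (sum_mem fun j _ ↦
    pow_mem (pow_mem hζmem 2) j) (p - 1), by rw [← mul_pow, hinv, one_pow]⟩, fun hfin ↦ ?_⟩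
  have hfin1 : IsOfFinOrder (ζ + 1) := (isOfFinOrder_pow.mp hfin).resolve_right (by omega)
  have hcube : ζ ^ 3 = 1 := by
    linear_combination (ζ - 1) * Complex.sq_add_self_add_one_eq_zero
      (hζ.isOfFinOrder hp.ne_zero).norm_eq_one hfin1.norm_eq_one
  have := Nat.le_of_dvd (by norm_num) (hζ.dvd_of_pow_eq_one 3 hcube)
  omega
end
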